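/- arXiv:2302.14356 — 6 statements merged into one kernel-verified Lean document; each statement's English description precedes it below -/
import Mathlib

section
/- Let A be a finite alphabet, P a probability distribution on A, and X₁,…,Xₙ i.i.d. random variables with law P. Let w be a nonoverlapping word over A, and let N(w; X₁…Xₙ) = Σ_{i=1}^{n-|w|+1} 1[X_i…X_{i+|w|-1} = w] count occurrences of w. Then for every s ≥ 0, P(N(w; X₁…Xₙ) = s) = Σ_{k ≥ s, |w|k ≤ n} (-1)^{k-s} · C(n - |w|k + k; s, k-s) · P(w)^k, where C(m; a, b) = m!/(a! b! (m-a-b)!) and P(w) is the product of the letter probabilities of w. -/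
open Finset
open scoped BigOperators Classical

noncomputable section

/-- Number of occurrences of the word `w` in the string `x`. -/
def occCount {A : Type*} [DecidableEq A] (w x : List A) : ℕ :=
  (List.range (x.length + 1 - w.length)).countP
    (fun i => decide (List.take w.length (List.drop i x) = w))

/-- A word is nonoverlapping if no string of length `< 2|w|` contains two occurrences. -/
def Nonoverlapping {A : Type*} [DecidableEq A] (w : List A) : Prop :=
  ¬ ∃ z : List A, z.length < 2 * w.length ∧ 2 ≤ occCount w z

/-- Probability of a word under the i.i.d. letter law `P`. -/
def wordProb {A : Type*} (P : A → ℝ) (w : List A) : ℝ := (w.map P).prod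

/-- Probability of the event `E` for `n` i.i.d. letters with law `P`. -/
def strProb {A : Type*} [Fintype A] (P : A → ℝ) (n : ℕ)
    (E : (Fin n → A) → Prop) : ℝ :=
  ∑ x : Fin n → A, if E x then (∏ i, P (x i)) else 0


lemma countP_range_eq (N : ℕ) (p : ℕ → Prop) [DecidablePred p] :
    (List.range N).countP (fun i => decide (p i)) = ((Finset.range N).filter p).card := by
  induction N with
  | zero => simp
  | succ n ih =>
    rw [List.range_succ, List.countP_append, Finset.range_add_one, Finset.filter_insert]
    by_cases h : p n
    · rw [if_pos h, Finset.card_insert_of_notMem (fun hmem => by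
        simp only [Finset.mem_filter, Finset.mem_range] at hmem; omega), ih]
      simp [h]
    · rw [if_neg h, ih]
      simp [h]

lemma delta_lemma (c s : ℕ) :
    ∑ k ∈ range (c+1), ((-1:ℝ))^(k-s) * ((c.choose k * k.choose s : ℕ) : ℝ)
      = if c = s then 1 else 0 := by
  rcases lt_or_ge c s with h | h
  · rw [if_neg (by omega)]
    refine Finset.sum_eq_zero fun k hk => ?_
    rw [mem_range] at hk
    rw [Nat.choose_eq_zero_of_lt (show k < s by omega)]
    simp
  · have h1 : ∑ k ∈ range (c+1), ((-1:ℝ))^(k-s) * ((c.choose k * k.choose s : ℕ) : ℝ)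
        = ∑ k ∈ Finset.Ico s (c+1), ((-1:ℝ))^(k-s) * ((c.choose k * k.choose s : ℕ) : ℝ) := by
      refine (Finset.sum_subset (by intro x hx; simp at *; omega) ?_).symm
      intro k hk hk'
      simp only [mem_range] at hk
      simp only [mem_Ico, not_and, not_le] at hk'
      rw [Nat.choose_eq_zero_of_lt (show k < s by omega)]
      simp
    rw [h1, Finset.sum_Ico_eq_sum_range]
    have h2 : ∀ j ∈ range (c + 1 - s), ((-1:ℝ))^(s+j-s) * ((c.choose (s+j) * (s+j).choose s : ℕ) : ℝ)
        = (c.choose s : ℝ) * ((-1:ℝ)^j * ((c-s).choose j : ℕ)) := by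
      intro j hj
      rw [mem_range] at hj
      rw [Nat.choose_mul (n := c) (Nat.le_add_right s j)]
      simp only [show s + j - s = j from by omega]
      push_cast
      ring
    rw [Finset.sum_congr rfl h2, ← Finset.mul_sum]
    rw [show c + 1 - s = (c - s) + 1 from by omega]
    have h4 : ∑ j ∈ range ((c-s)+1), ((-1:ℝ)^j * ((c-s).choose j : ℕ))
        = if c - s = 0 then 1 else 0 := by
      by_cases hcs : c - s = 0
      · rw [hcs]; simp
      · rw [if_neg hcs]
        exact_mod_cast Int.alternating_sum_range_choose_of_ne hcs
    rw [h4]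
    by_cases h5 : c = s
    · subst h5; simp
    · rw [if_neg (by omega), if_neg h5, mul_zero]

lemma indicator_expand (m s : ℕ) (O : Finset ℕ) (hO : O ⊆ Finset.range m) :
    (if O.card = s then (1:ℝ) else 0)
      = ∑ T ∈ (Finset.range m).powerset,
          (if T ⊆ O then ((-1:ℝ))^(T.card - s) * (T.card.choose s : ℕ) else 0) := by
  have h1 : ∑ T ∈ (Finset.range m).powerset,
        (if T ⊆ O then ((-1:ℝ))^(T.card - s) * (T.card.choose s : ℕ) else 0)
      = ∑ T ∈ O.powerset, ((-1:ℝ))^(T.card - s) * (T.card.choose s : ℕ) := by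
    rw [← Finset.sum_subset (Finset.powerset_mono.2 hO) (fun T hT hT' => by
      rw [if_neg]; intro hsub; exact hT' (Finset.mem_powerset.2 hsub))]
    exact Finset.sum_congr rfl fun T hT => if_pos (Finset.mem_powerset.1 hT)
  rw [h1, Finset.sum_powerset_apply_card (fun c => ((-1:ℝ))^(c - s) * (c.choose s : ℕ))]
  have h2 : ∀ k ∈ range (O.card + 1),
      (O.card.choose k) • (((-1:ℝ))^(k - s) * (k.choose s : ℕ))
        = ((-1:ℝ))^(k-s) * ((O.card.choose k * k.choose s : ℕ) : ℝ) := by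
    intro k hk; push_cast; ring
  rw [Finset.sum_congr rfl h2, delta_lemma O.card s, eq_comm]


def Sparse (ℓ : ℕ) (T : Finset ℕ) : Prop := ∀ t ∈ T, ∀ u ∈ T, t < u → t + ℓ ≤ u

noncomputable def rk (S : Finset ℕ) (t : ℕ) : ℕ := (S.filter (fun y => y < t)).card

lemma erase_filter_lt {T : Finset ℕ} {v t : ℕ} (hvT : v ∈ T) (hvt : v < t)
    (hmax : ∀ u ∈ T, u < t → u ≤ v) :
    T.filter (fun y => y < v) = (T.filter (fun y => y < t)).erase v := by
  ext u
  simp only [Finset.mem_filter, Finset.mem_erase]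
  constructor
  · rintro ⟨hu, huv⟩; exact ⟨by omega, hu, by omega⟩
  · rintro ⟨hne', hu, hut⟩
    have := hmax u hu hut
    exact ⟨hu, by omega⟩

lemma rk_lt_of_max {T : Finset ℕ} {v t : ℕ} (hvT : v ∈ T) (hvt : v < t)
    (hmax : ∀ u ∈ T, u < t → u ≤ v) : rk T v + 1 = rk T t := by
  have hvf : v ∈ T.filter (fun y => y < t) := Finset.mem_filter.2 ⟨hvT, hvt⟩
  have h1 : rk T v = (T.filter (fun y => y < t)).card - 1 := by
    rw [rk, erase_filter_lt hvT hvt hmax, Finset.card_erase_of_mem hvf]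
  have h2 : 1 ≤ (T.filter (fun y => y < t)).card := Finset.card_pos.2 ⟨v, hvf⟩
  have h3 : rk T t = (T.filter (fun y => y < t)).card := rfl
  omega

lemma sparse_rank_le {ℓ : ℕ} {T : Finset ℕ} (hT : Sparse ℓ T) :
    ∀ c t, t ∈ T → rk T t = c → ℓ * c ≤ t := by
  intro c
  induction c with
  | zero => intro t _ _; omega
  | succ c ih =>
    intro t ht hc
    have hne : (T.filter (fun y => y < t)).Nonempty := by
      rw [← Finset.card_pos, show (T.filter (fun y => y < t)).card = c + 1 from hc]
      omega
    obtain ⟨v, hvf, hvmax⟩ : ∃ v ∈ T.filter (fun y => y < t), ∀ u ∈ T.filter (fun y => y < t), u ≤ v :=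
      ⟨_, (T.filter (fun y => y < t)).max'_mem hne, fun u hu => Finset.le_max' _ u hu⟩
    rw [Finset.mem_filter] at hvf
    obtain ⟨hvT, hvt⟩ := hvf
    have hmax : ∀ u ∈ T, u < t → u ≤ v := fun u hu hut => hvmax u (Finset.mem_filter.2 ⟨hu, hut⟩)
    have hrk := rk_lt_of_max hvT hvt hmax
    have hcv : rk T v = c := by omega
    have h1 := ih v hvT hcv
    have h2 : v + ℓ ≤ t := hT v hvT t ht hvt
    have h3 : ℓ * (c + 1) = ℓ * c + ℓ := by ring
    omega

lemma sparse_chain {ℓ : ℕ} {T : Finset ℕ} (hT : Sparse ℓ T) :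
    ∀ c t u, t ∈ T → u ∈ T → t < u → rk T u = c → ℓ * c + t ≤ ℓ * (rk T t) + u := by
  intro c
  induction c with
  | zero =>
    intro t u ht hu htu hc
    exfalso
    have h1 : t ∈ T.filter (fun y => y < u) := Finset.mem_filter.2 ⟨ht, htu⟩
    have := Finset.card_pos.2 ⟨t, h1⟩
    rw [rk] at hc
    omega
  | succ c ih =>
    intro t u ht hu htu hc
    have htf : t ∈ T.filter (fun y => y < u) := Finset.mem_filter.2 ⟨ht, htu⟩
    have hne : (T.filter (fun y => y < u)).Nonempty := ⟨t, htf⟩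
    obtain ⟨v, hvf, hvmax⟩ : ∃ v ∈ T.filter (fun y => y < u), ∀ w ∈ T.filter (fun y => y < u), w ≤ v :=
      ⟨_, (T.filter (fun y => y < u)).max'_mem hne, fun w hw => Finset.le_max' _ w hw⟩
    rw [Finset.mem_filter] at hvf
    obtain ⟨hvT, hvu⟩ := hvf
    have htv : t ≤ v := hvmax t htf
    have hmax : ∀ w ∈ T, w < u → w ≤ v := fun w hw hwu => hvmax w (Finset.mem_filter.2 ⟨hw, hwu⟩)
    have hrk := rk_lt_of_max hvT hvu hmax
    have hcv : rk T v = c := by omega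
    have hexp : ℓ * (c + 1) = ℓ * c + ℓ := by ring
    rcases eq_or_lt_of_le htv with heq | hlt
    · have h2 : t + ℓ ≤ u := hT t ht u hu htu
      have h5 : ℓ * (rk T t) = ℓ * c := by rw [show rk T t = c from heq ▸ hcv]
      omega
    · have h1 := ih t v ht hvT hlt hcv
      have h2 : v + ℓ ≤ u := hT v hvT u hu hvu
      omega

lemma sparse_upper {ℓ m : ℕ} {T : Finset ℕ} (hT : Sparse ℓ T) (hTm : T ⊆ Finset.range m) :
    ∀ c t, t ∈ T → (T.filter (fun y => t < y)).card = c → t + ℓ * c < m := by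
  intro c
  induction c with
  | zero =>
    intro t ht _
    have := hTm ht
    rw [Finset.mem_range] at this
    omega
  | succ c ih =>
    intro t ht hc
    have hne : (T.filter (fun y => t < y)).Nonempty := by
      rw [← Finset.card_pos, hc]; omega
    obtain ⟨v, hvf, hvmin⟩ : ∃ v ∈ T.filter (fun y => t < y), ∀ w ∈ T.filter (fun y => t < y), v ≤ w :=
      ⟨_, (T.filter (fun y => t < y)).min'_mem hne, fun w hw => Finset.min'_le _ w hw⟩
    rw [Finset.mem_filter] at hvf
    obtain ⟨hvT, htv⟩ := hvf
    have hvf' : v ∈ T.filter (fun y => t < y) := Finset.mem_filter.2 ⟨hvT, htv⟩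
    have key : T.filter (fun y => v < y) = (T.filter (fun y => t < y)).erase v := by
      ext w
      simp only [Finset.mem_filter, Finset.mem_erase]
      constructor
      · rintro ⟨hw, hvw⟩; exact ⟨by omega, hw, by omega⟩
      · rintro ⟨hne', hw, htw⟩
        have := hvmin w (Finset.mem_filter.2 ⟨hw, htw⟩)
        exact ⟨hw, by omega⟩
    have hcv : (T.filter (fun y => v < y)).card = c := by
      rw [key, Finset.card_erase_of_mem hvf', hc]
      omega
    have h1 := ih v hvT hcv
    have h2 : t + ℓ ≤ v := hT t ht v hvT htv
    have hexp : ℓ * (c + 1) = ℓ * c + ℓ := by ring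
    omega

lemma strictMonoOn_injOn {g : ℕ → ℕ} {S : Finset ℕ}
    (hg : ∀ a ∈ S, ∀ b ∈ S, a < b → g a < g b) : Set.InjOn g S := by
  intro a ha b hb hab
  by_contra hne
  rcases lt_trichotomy a b with h | h | h
  · have := hg a ha b hb h; omega
  · exact hne h
  · have := hg b hb a ha h; omega

lemma rk_image {g : ℕ → ℕ} {S : Finset ℕ}
    (hg : ∀ a ∈ S, ∀ b ∈ S, a < b → g a < g b) {t : ℕ} (ht : t ∈ S) :
    rk (S.image g) (g t) = rk S t := by
  have himg : (S.image g).filter (fun y => y < g t) = (S.filter (fun y => y < t)).image g := by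
    ext y
    simp only [Finset.mem_filter, Finset.mem_image]
    constructor
    · rintro ⟨⟨a, ha, rfl⟩, hlt⟩
      refine ⟨a, ⟨ha, ?_⟩, rfl⟩
      by_contra hta
      push_neg at hta
      rcases eq_or_lt_of_le hta with h | h
      · subst h; omega
      · have := hg t ht a ha h; omega
    · rintro ⟨a, ⟨ha, hat⟩, rfl⟩
      exact ⟨⟨a, ha, rfl⟩, hg a ha t ht hat⟩
  rw [rk, himg, Finset.card_image_of_injOn
    ((strictMonoOn_injOn hg).mono (fun y hy => (Finset.mem_filter.1 hy).1))]
  rfl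

lemma image_image_eq_self {g h : ℕ → ℕ} {S : Finset ℕ}
    (hh : ∀ a ∈ S, h (g a) = a) : (S.image g).image h = S := by
  rw [Finset.image_image]
  calc S.image (h ∘ g) = S.image id := Finset.image_congr (fun a ha => hh a ha)
  _ = S := Finset.image_id

lemma rk_le_of_subset {S : Finset ℕ} {k v : ℕ} (hcard : S.card = k) (hv : v ∈ S) :
    rk S v + 1 ≤ k := by
  have h1 : S.filter (fun y => y < v) ⊆ S.erase v := by
    intro u hu
    rw [Finset.mem_filter] at hu
    exact Finset.mem_erase.2 ⟨by omega, hu.1⟩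
  have := Finset.card_le_card h1
  rw [Finset.card_erase_of_mem hv, hcard] at this
  have h2 : 1 ≤ k := by rw [← hcard]; exact Finset.card_pos.2 ⟨v, hv⟩
  rw [rk]
  omega

lemma rk_mem_partition {T : Finset ℕ} {k t : ℕ} (hcard : T.card = k) (ht : t ∈ T) :
    rk T t + 1 + (T.filter (fun y => t < y)).card = k := by
  have h1 : T.filter (fun y => t ≤ y) = insert t (T.filter (fun y => t < y)) := by
    ext u
    simp only [Finset.mem_filter, Finset.mem_insert]
    constructor
    · rintro ⟨hu, hut⟩
      rcases eq_or_lt_of_le hut with h | h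
      · left; omega
      · exact Or.inr ⟨hu, h⟩
    · rintro (rfl | ⟨hu, htu⟩)
      · exact ⟨ht, by omega⟩
      · exact ⟨hu, by omega⟩
  have h2 := Finset.card_filter_add_card_filter_not (s := T) (p := fun y => y < t)
  simp only [not_lt] at h2
  rw [h1, Finset.card_insert_of_notMem (by simp)] at h2
  rw [rk, ← hcard]
  omega

/-- Number of sparse `k`-subsets. -/
lemma sparse_count (ℓ n k : ℕ) (hℓ : 1 ≤ ℓ) :
    ((Finset.powersetCard k (Finset.range (n + 1 - ℓ))).filter (Sparse ℓ)).card
      = if ℓ * k ≤ n then (n - ℓ * k + k).choose k else 0 := by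
  by_cases hkn : ℓ * k ≤ n
  · rw [if_pos hkn]
    have hR : (n - ℓ * k + k).choose k
        = (Finset.powersetCard k (Finset.range (n - ℓ * k + k))).card := by
      rw [Finset.card_powersetCard, Finset.card_range]
    rw [hR]
    apply Finset.card_nbij'
      (i := fun T => T.image (fun t => t - (ℓ - 1) * rk T t))
      (j := fun S => S.image (fun v => v + (ℓ - 1) * rk S v))
    · -- hi : fwd maps into powersetCard k (range (n - ℓ*k + k))
      intro T hT
      rw [Finset.mem_coe, Finset.mem_filter, Finset.mem_powersetCard] at hT
      obtain ⟨⟨hTsub, hTcard⟩, hTsp⟩ := hT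
      have hmono : ∀ a ∈ T, ∀ b ∈ T, a < b →
          a - (ℓ - 1) * rk T a < b - (ℓ - 1) * rk T b := by
        intro a ha b hb hab
        have hL0a := sparse_rank_le hTsp (rk T a) a ha rfl
        have hL0b := sparse_rank_le hTsp (rk T b) b hb rfl
        have hch := sparse_chain hTsp (rk T b) a b ha hb hab rfl
        have hlt : rk T a + 1 ≤ rk T b := by
          have h1 : insert a (T.filter (fun y => y < a)) ⊆ T.filter (fun y => y < b) := by
            intro u hu
            rw [Finset.mem_insert] at hu
            rcases hu with rfl | hu
            · exact Finset.mem_filter.2 ⟨ha, hab⟩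
            · rw [Finset.mem_filter] at hu ⊢; exact ⟨hu.1, by omega⟩
          have := Finset.card_le_card h1
          rw [Finset.card_insert_of_notMem (by simp)] at this
          rw [rk, rk]; exact this
        have e1 : (ℓ - 1) * rk T a + rk T a = ℓ * rk T a := by
          rw [Nat.sub_one_mul]
          have : rk T a ≤ ℓ * rk T a := Nat.le_mul_of_pos_left _ (by omega)
          omega
        have e2 : (ℓ - 1) * rk T b + rk T b = ℓ * rk T b := by
          rw [Nat.sub_one_mul]
          have : rk T b ≤ ℓ * rk T b := Nat.le_mul_of_pos_left _ (by omega)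
          omega
        omega
      rw [Finset.mem_coe, Finset.mem_powersetCard]
      constructor
      · intro y hy
        rw [Finset.mem_image] at hy
        obtain ⟨t, ht, rfl⟩ := hy
        rw [Finset.mem_range]
        have hL0 := sparse_rank_le hTsp (rk T t) t ht rfl
        have hL2 := sparse_upper hTsp hTsub ((T.filter (fun y => t < y)).card) t ht rfl
        have hpart := rk_mem_partition hTcard ht
        have e1 : (ℓ - 1) * rk T t + rk T t = ℓ * rk T t := by
          rw [Nat.sub_one_mul]
          have : rk T t ≤ ℓ * rk T t := Nat.le_mul_of_pos_left _ (by omega)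
          omega
        have e2 : ℓ * rk T t + ℓ + ℓ * ((T.filter (fun y => t < y)).card) = ℓ * k := by
          rw [← hpart]; ring
        omega
      · rw [Finset.card_image_of_injOn (strictMonoOn_injOn hmono), hTcard]
    · -- hj : bwd maps into sparse filter
      intro S hS
      rw [Finset.mem_coe, Finset.mem_powersetCard] at hS
      obtain ⟨hSsub, hScard⟩ := hS
      have hmono : ∀ a ∈ S, ∀ b ∈ S, a < b →
          (a + (ℓ - 1) * rk S a) + ℓ ≤ b + (ℓ - 1) * rk S b := by
        intro a ha b hb hab
        have hlt : rk S a + 1 ≤ rk S b := by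
          have h1 : insert a (S.filter (fun y => y < a)) ⊆ S.filter (fun y => y < b) := by
            intro u hu
            rw [Finset.mem_insert] at hu
            rcases hu with rfl | hu
            · exact Finset.mem_filter.2 ⟨ha, hab⟩
            · rw [Finset.mem_filter] at hu ⊢; exact ⟨hu.1, by omega⟩
          have := Finset.card_le_card h1
          rw [Finset.card_insert_of_notMem (by simp)] at this
          rw [rk, rk]; exact this
        have e1 : (ℓ - 1) * (rk S a + 1) + 1 = (ℓ - 1) * rk S a + ℓ := by
          rw [Nat.mul_add]; omega
        have e2 : (ℓ - 1) * (rk S a + 1) ≤ (ℓ - 1) * rk S b :=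
          Nat.mul_le_mul_left _ hlt
        omega
      have hmono' : ∀ a ∈ S, ∀ b ∈ S, a < b →
          (a + (ℓ - 1) * rk S a) < b + (ℓ - 1) * rk S b := by
        intro a ha b hb hab
        have := hmono a ha b hb hab
        omega
      rw [Finset.mem_coe, Finset.mem_filter, Finset.mem_powersetCard]
      refine ⟨⟨?_, ?_⟩, ?_⟩
      · intro y hy
        rw [Finset.mem_image] at hy
        obtain ⟨v, hv, rfl⟩ := hy
        rw [Finset.mem_range]
        have hv' : v < n - ℓ * k + k := Finset.mem_range.1 (hSsub hv)
        have hle : rk S v + 1 ≤ k := rk_le_of_subset hScard hv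
        have e2 : (ℓ - 1) * (rk S v + 1) ≤ (ℓ - 1) * k := Nat.mul_le_mul_left _ hle
        have e3 : (ℓ - 1) * k + k = ℓ * k := by
          rw [Nat.sub_one_mul]
          have : k ≤ ℓ * k := Nat.le_mul_of_pos_left _ (by omega)
          omega
        have e4 : (ℓ - 1) * (rk S v + 1) = (ℓ - 1) * rk S v + (ℓ - 1) := by ring
        omega
      · rw [Finset.card_image_of_injOn (strictMonoOn_injOn hmono'), hScard]
      · -- sparsity of the image
        intro a ha b hb hab
        rw [Finset.mem_image] at ha hb
        obtain ⟨va, hva, rfl⟩ := ha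
        obtain ⟨vb, hvb, rfl⟩ := hb
        have hvab : va < vb := by
          by_contra hcon
          push_neg at hcon
          rcases eq_or_lt_of_le hcon with h | h
          · subst h; omega
          · have := hmono' vb hvb va hva h; omega
        exact hmono va hva vb hvb hvab
    · -- left_inv
      intro T hT
      rw [Finset.mem_coe, Finset.mem_filter, Finset.mem_powersetCard] at hT
      obtain ⟨⟨hTsub, hTcard⟩, hTsp⟩ := hT
      have hmono : ∀ a ∈ T, ∀ b ∈ T, a < b →
          a - (ℓ - 1) * rk T a < b - (ℓ - 1) * rk T b := by
        intro a ha b hb hab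
        have hL0a := sparse_rank_le hTsp (rk T a) a ha rfl
        have hL0b := sparse_rank_le hTsp (rk T b) b hb rfl
        have hch := sparse_chain hTsp (rk T b) a b ha hb hab rfl
        have hlt : rk T a + 1 ≤ rk T b := by
          have h1 : insert a (T.filter (fun y => y < a)) ⊆ T.filter (fun y => y < b) := by
            intro u hu
            rw [Finset.mem_insert] at hu
            rcases hu with rfl | hu
            · exact Finset.mem_filter.2 ⟨ha, hab⟩
            · rw [Finset.mem_filter] at hu ⊢; exact ⟨hu.1, by omega⟩
          have := Finset.card_le_card h1
          rw [Finset.card_insert_of_notMem (by simp)] at this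
          rw [rk, rk]; exact this
        have e1 : (ℓ - 1) * rk T a + rk T a = ℓ * rk T a := by
          rw [Nat.sub_one_mul]
          have : rk T a ≤ ℓ * rk T a := Nat.le_mul_of_pos_left _ (by omega)
          omega
        have e2 : (ℓ - 1) * rk T b + rk T b = ℓ * rk T b := by
          rw [Nat.sub_one_mul]
          have : rk T b ≤ ℓ * rk T b := Nat.le_mul_of_pos_left _ (by omega)
          omega
        omega
      apply image_image_eq_self
      intro t ht
      have hrk := rk_image hmono ht
      rw [hrk]
      have hL0 := sparse_rank_le hTsp (rk T t) t ht rfl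
      have e1 : (ℓ - 1) * rk T t ≤ ℓ * rk T t := Nat.mul_le_mul_right _ (by omega)
      omega
    · -- right_inv
      intro S hS
      rw [Finset.mem_coe, Finset.mem_powersetCard] at hS
      obtain ⟨hSsub, hScard⟩ := hS
      have hmono' : ∀ a ∈ S, ∀ b ∈ S, a < b →
          (a + (ℓ - 1) * rk S a) < b + (ℓ - 1) * rk S b := by
        intro a ha b hb hab
        have hlt : rk S a + 1 ≤ rk S b := by
          have h1 : insert a (S.filter (fun y => y < a)) ⊆ S.filter (fun y => y < b) := by
            intro u hu
            rw [Finset.mem_insert] at hu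
            rcases hu with rfl | hu
            · exact Finset.mem_filter.2 ⟨ha, hab⟩
            · rw [Finset.mem_filter] at hu ⊢; exact ⟨hu.1, by omega⟩
          have := Finset.card_le_card h1
          rw [Finset.card_insert_of_notMem (by simp)] at this
          rw [rk, rk]; exact this
        have e2 : (ℓ - 1) * rk S a ≤ (ℓ - 1) * rk S b := Nat.mul_le_mul_left _ (by omega)
        omega
      apply image_image_eq_self
      intro v hv
      have hrk := rk_image hmono' hv
      rw [hrk]
      omega
  · rw [if_neg hkn, Finset.card_eq_zero]
    rw [Finset.eq_empty_iff_forall_notMem]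
    intro T hT
    rw [Finset.mem_filter, Finset.mem_powersetCard] at hT
    obtain ⟨⟨hTsub, hTcard⟩, hTsp⟩ := hT
    have hk1 : 1 ≤ k := by by_contra h; push_neg at h; interval_cases k <;> omega
    have hne : T.Nonempty := by rw [← Finset.card_pos, hTcard]; omega
    obtain ⟨v, hvT, hvmax⟩ : ∃ v ∈ T, ∀ u ∈ T, u ≤ v :=
      ⟨T.max' hne, T.max'_mem hne, fun u hu => Finset.le_max' T u hu⟩
    have hrk : rk T v = k - 1 := by
      have h1 : T.filter (fun y => y < v) = T.erase v := by
        ext u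
        simp only [Finset.mem_filter, Finset.mem_erase]
        constructor
        · rintro ⟨hu, huv⟩; exact ⟨by omega, hu⟩
        · rintro ⟨hne', hu⟩; have := hvmax u hu; exact ⟨hu, by omega⟩
      rw [rk, h1, Finset.card_erase_of_mem hvT, hTcard]
    have hL0 := sparse_rank_le hTsp (k - 1) v hvT hrk
    have hvr : v < n + 1 - ℓ := Finset.mem_range.1 (hTsub hvT)
    have e1 : ℓ * (k - 1) + ℓ = ℓ * k := by
      rw [Nat.mul_sub_one]
      have : ℓ ≤ ℓ * k := Nat.le_mul_of_pos_right _ (by omega)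
      omega
    omega

lemma prod_if_forall {A : Type*} [Fintype A] {n : ℕ} (P : A → ℝ) (C : Fin n → A → Prop)
    (x : Fin n → A) :
    (if (∀ i, C i (x i)) then ∏ i, P (x i) else 0) = ∏ i, (if C i (x i) then P (x i) else 0) := by
  by_cases h : ∀ i, C i (x i)
  · rw [if_pos h]
    exact Finset.prod_congr rfl fun i _ => (if_pos (h i)).symm
  · rw [if_neg h]
    push_neg at h
    obtain ⟨i0, hi0⟩ := h
    exact (Finset.prod_eq_zero (Finset.mem_univ i0) (if_neg hi0 : _ = (0:ℝ))).symm

lemma sum_prod_eval {A : Type*} [Fintype A] {n : ℕ} (g : Fin n → A → ℝ) :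
    ∑ x : Fin n → A, ∏ i, g i (x i) = ∏ i, ∑ a, g i a :=
  (Fintype.prod_sum g).symm

lemma window_iff {A : Type*} [DecidableEq A] {n : ℕ} (x : Fin n → A) (w : List A) (i : ℕ)
    (h : i + w.length ≤ n) :
    List.take w.length (List.drop i (List.ofFn x)) = w ↔
      ∀ j : Fin w.length, x ⟨i + (j : ℕ), by omega⟩ = w.get j := by
  have hlen : (List.take w.length (List.drop i (List.ofFn x))).length = w.length := by
    simp only [List.length_take, List.length_drop, List.length_ofFn]
    omega
  have key : ∀ (k : ℕ) (hk : k < w.length),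
      (List.take w.length (List.drop i (List.ofFn x)))[k]'(by omega) = x ⟨i + k, by omega⟩ := by
    intro k hk
    simp [List.getElem_take, List.getElem_drop, List.getElem_ofFn]
  constructor
  · intro he j
    have h2 := key (j : ℕ) j.2
    rw [List.getElem_of_eq he (by omega)] at h2
    rw [← h2, List.get_eq_getElem]
  · intro hj
    apply List.ext_getElem hlen
    intro k h1 h2
    rw [key k (by omega)]
    rw [← List.get_eq_getElem (l := w) (i := ⟨k, h2⟩)]
    exact hj ⟨k, h2⟩

lemma Q_eval {A : Type*} [Fintype A] [DecidableEq A] (P : A → ℝ) (hP1 : ∑ a, P a = 1)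
    (n : ℕ) (w : List A) (hw : w ≠ []) (hno : Nonoverlapping w) (T : Finset ℕ)
    (hTsub : T ⊆ Finset.range (n + 1 - w.length)) :
    ∑ x : Fin n → A, (if T ⊆ (Finset.range (n + 1 - w.length)).filter
          (fun i => List.take w.length (List.drop i (List.ofFn x)) = w)
        then ∏ i, P (x i) else 0)
      = if Sparse w.length T then wordProb P w ^ T.card else 0 := by
  have hℓ : 1 ≤ w.length := List.length_pos_iff.2 hw
  have hcond : ∀ x : Fin n → A,
      (T ⊆ (Finset.range (n + 1 - w.length)).filter
        (fun i => List.take w.length (List.drop i (List.ofFn x)) = w))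
      ↔ ∀ t ∈ T, List.take w.length (List.drop t (List.ofFn x)) = w := by
    intro x
    constructor
    · intro h t ht
      exact (Finset.mem_filter.1 (h ht)).2
    · intro h t ht
      exact Finset.mem_filter.2 ⟨hTsub ht, h t ht⟩
  have hbound : ∀ t ∈ T, t + w.length ≤ n := by
    intro t ht
    have := Finset.mem_range.1 (hTsub ht)
    omega
  by_cases hsp : Sparse w.length T
  swap
  · rw [if_neg hsp]
    apply Finset.sum_eq_zero
    intro x _
    rw [if_neg]
    intro hx
    rw [hcond x] at hx
    rw [Sparse] at hsp
    push_neg at hsp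
    obtain ⟨t, ht, u, hu, htu, hlt⟩ := hsp
    apply hno
    have htn := hbound t ht
    have hun := hbound u hu
    set z := List.take (u - t + w.length) (List.drop t (List.ofFn x)) with hz
    have hzlen : z.length = u - t + w.length := by
      rw [hz]
      simp only [List.length_take, List.length_drop, List.length_ofFn]
      omega
    refine ⟨z, by omega, ?_⟩
    rw [occCount, countP_range_eq _ (fun i => List.take w.length (List.drop i z) = w)]
    have h0 : (0:ℕ) ∈ (Finset.range (z.length + 1 - w.length)).filter
        (fun i => List.take w.length (List.drop i z) = w) := by
      rw [Finset.mem_filter, Finset.mem_range]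
      refine ⟨by omega, ?_⟩
      rw [List.drop_zero, hz, List.take_take, min_eq_left (by omega)]
      exact hx t ht
    have h1 : (u - t) ∈ (Finset.range (z.length + 1 - w.length)).filter
        (fun i => List.take w.length (List.drop i z) = w) := by
      rw [Finset.mem_filter, Finset.mem_range]
      refine ⟨by omega, ?_⟩
      rw [hz, List.drop_take, List.drop_drop,
        show u - t + w.length - (u - t) = w.length from by omega,
        show t + (u - t) = u from by omega, List.take_take, min_self]
      exact hx u hu
    have h2 : 1 < ((Finset.range (z.length + 1 - w.length)).filter
        (fun i => List.take w.length (List.drop i z) = w)).card :=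
      Finset.one_lt_card.2 ⟨0, h0, u - t, h1, by omega⟩
    omega
  · rw [if_pos hsp]
    have hNE : Nonempty A := by
      by_contra hne
      rw [not_nonempty_iff] at hne
      rw [Finset.univ_eq_empty, Finset.sum_empty] at hP1
      norm_num at hP1
    classical
    set Cc : Fin n → A → Prop :=
      fun i a => ∀ t ∈ T, ∀ j : Fin w.length, t + (j : ℕ) = (i : ℕ) → a = w.get j with hCc
    have hiff : ∀ x : Fin n → A,
        (∀ t ∈ T, List.take w.length (List.drop t (List.ofFn x)) = w) ↔ (∀ i, Cc i (x i)) := by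
      intro x
      constructor
      · intro h i t ht j hij
        have hb := hbound t ht
        have h2 := (window_iff x w t hb).1 (h t ht) j
        rw [show i = (⟨t + (j : ℕ), by omega⟩ : Fin n) from Fin.ext hij.symm]
        exact h2
      · intro h t ht
        have hb := hbound t ht
        apply (window_iff x w t hb).2
        intro j
        exact h ⟨t + (j : ℕ), by omega⟩ t ht j rfl
    have step1 : ∀ x : Fin n → A,
        (if T ⊆ (Finset.range (n + 1 - w.length)).filter
            (fun i => List.take w.length (List.drop i (List.ofFn x)) = w)
          then ∏ i, P (x i) else 0)
        = ∏ i, (if Cc i (x i) then P (x i) else 0) := by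
      intro x
      have hEq := (hcond x).trans (hiff x)
      by_cases hx : ∀ i, Cc i (x i)
      · rw [if_pos (hEq.2 hx)]
        exact Finset.prod_congr rfl fun i _ => (if_pos (hx i)).symm
      · rw [if_neg (fun hc => hx (hEq.1 hc))]
        push_neg at hx
        obtain ⟨i0, hi0⟩ := hx
        exact (Finset.prod_eq_zero (Finset.mem_univ i0) (if_neg hi0 : _ = (0:ℝ))).symm
    have hsum : (∑ x : Fin n → A, if T ⊆ (Finset.range (n + 1 - w.length)).filter
          (fun i => List.take w.length (List.drop i (List.ofFn x)) = w)
        then ∏ i, P (x i) else 0)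
        = ∏ i, ∑ a, (if Cc i a then P a else 0) := by
      rw [Finset.sum_congr rfl (fun x _ => step1 x)]
      exact sum_prod_eval (fun i a => if Cc i a then P a else 0)
    rw [hsum]
    set U : Finset (Fin n) :=
      Finset.univ.filter (fun i : Fin n => ∃ t ∈ T, ∃ j : Fin w.length, t + (j : ℕ) = (i : ℕ))
      with hU
    have hqout : ∀ i : Fin n, i ∉ U → (∑ a, if Cc i a then P a else 0) = 1 := by
      intro i hi
      rw [hU, Finset.mem_filter] at hi
      push_neg at hi
      have hall : ∀ a, Cc i a := by
        intro a t ht j hij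
        exact absurd hij (hi (Finset.mem_univ i) t ht j)
      calc ∑ a, (if Cc i a then P a else 0) = ∑ a, P a :=
            Finset.sum_congr rfl fun a _ => if_pos (hall a)
      _ = 1 := hP1
    have huniq : ∀ t ∈ T, ∀ t' ∈ T, ∀ (j j' : Fin w.length),
        t + (j : ℕ) = t' + (j' : ℕ) → t = t' := by
      intro t ht t' ht' j j' he
      by_contra hne
      rcases Nat.lt_or_ge t t' with h | h
      · have := hsp t ht t' ht' h
        have := j.2
        omega
      · rcases Nat.lt_or_ge t' t with h' | h'
        · have := hsp t' ht' t ht h'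
          have := j'.2
          omega
        · omega
    have hqin : ∀ (t : ℕ) (ht : t ∈ T) (j : Fin w.length),
        (∑ a, if Cc (⟨t + (j : ℕ), by have := hbound t ht; have := j.2; omega⟩ : Fin n) a
          then P a else 0) = P (w.get j) := by
      intro t ht j
      have hCiff : ∀ a : A, Cc (⟨t + (j : ℕ), by have := hbound t ht; have := j.2; omega⟩ : Fin n) a
          ↔ a = w.get j := by
        intro a
        constructor
        · intro h
          exact h t ht j rfl
        · intro h t' ht' j' he
          have he' : t' + (j' : ℕ) = t + (j : ℕ) := by simpa using he
          have ht'' : t = t' := huniq t ht t' ht' j j' he'.symm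
          subst ht''
          have : (j : ℕ) = (j' : ℕ) := by omega
          rw [h]
          congr 1
          exact Fin.ext this
      calc ∑ a, (if Cc (⟨t + (j : ℕ), _⟩ : Fin n) a then P a else 0)
          = ∑ a, (if a = w.get j then P a else 0) :=
            Finset.sum_congr rfl fun a _ => if_congr (hCiff a) rfl rfl
      _ = P (w.get j) := by rw [Finset.sum_ite_eq' Finset.univ (w.get j) P, if_pos (Finset.mem_univ _)]
    rw [← Finset.prod_mul_prod_compl U (fun i => ∑ a, if Cc i a then P a else 0)]
    have hcompl : ∏ i ∈ Uᶜ, (∑ a, if Cc i a then P a else 0) = 1 := by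
      apply Finset.prod_eq_one
      intro i hi
      exact hqout i (Finset.mem_compl.1 hi)
    rw [hcompl, mul_one]
    have hpairs : ∏ p ∈ T ×ˢ (Finset.univ : Finset (Fin w.length)), P (w.get p.2)
        = ∏ i ∈ U, (∑ a, if Cc i a then P a else 0) := by
      refine Finset.prod_bij
        (fun p hp => (⟨p.1 + (p.2 : ℕ), by
          rw [Finset.mem_product] at hp
          have := hbound p.1 hp.1
          have := p.2.2
          omega⟩ : Fin n)) ?_ ?_ ?_ ?_
      · intro p hp
        rw [Finset.mem_product] at hp
        rw [hU, Finset.mem_filter]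
        exact ⟨Finset.mem_univ _, p.1, hp.1, p.2, rfl⟩
      · intro p hp q hq he
        rw [Finset.mem_product] at hp hq
        have he' : p.1 + (p.2 : ℕ) = q.1 + (q.2 : ℕ) := by
          have := congrArg (fun i : Fin n => (i : ℕ)) he
          simpa using this
        have h1 : p.1 = q.1 := huniq p.1 hp.1 q.1 hq.1 p.2 q.2 he'
        have h2 : (p.2 : ℕ) = (q.2 : ℕ) := by omega
        exact Prod.ext h1 (Fin.ext h2)
      · intro i hi
        rw [hU, Finset.mem_filter] at hi
        obtain ⟨-, t, ht, j, hij⟩ := hi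
        exact ⟨(t, j), Finset.mem_product.2 ⟨ht, Finset.mem_univ _⟩, Fin.ext hij⟩
      · intro p hp
        rw [Finset.mem_product] at hp
        exact (hqin p.1 hp.1 p.2).symm
    rw [← hpairs, Finset.prod_product]
    have hinner : ∀ t : ℕ, ∏ j : Fin w.length, P (w.get j) = wordProb P w := by
      intro t
      rw [wordProb]
      have : w.map P = List.ofFn (fun i : Fin w.length => P (w.get i)) := by
        conv_lhs => rw [← List.ofFn_get w]
        rw [List.map_ofFn]
        rfl
      rw [this, List.prod_ofFn]
    calc ∏ t ∈ T, ∏ j : Fin w.length, P (w.get j)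
        = ∏ t ∈ T, wordProb P w := Finset.prod_congr rfl fun t _ => hinner t
    _ = wordProb P w ^ T.card := Finset.prod_const _

/-- Explicit inclusion–exclusion formula for the distribution of the number of
occurrences of a nonoverlapping word `w` in `n` i.i.d. letters. -/
theorem stmt1 {A : Type*} [Fintype A] [DecidableEq A] (P : A → ℝ)
    (hP0 : ∀ a, 0 ≤ P a) (hP1 : ∑ a, P a = 1)
    (n : ℕ) (w : List A) (hw : w ≠ []) (hno : Nonoverlapping w) (s : ℕ) :
    strProb P n (fun x => occCount w (List.ofFn x) = s) =
      ∑ k ∈ Finset.range (n + 1),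
        if s ≤ k ∧ w.length * k ≤ n then
          (-1 : ℝ) ^ (k - s) *
            (((n - w.length * k + k).choose k * k.choose s : ℕ) : ℝ) *
            wordProb P w ^ k
        else 0 := by

  have hℓ : 1 ≤ w.length := List.length_pos_iff.2 hw
  have hOcc : ∀ x : Fin n → A, occCount w (List.ofFn x)
      = ((Finset.range (n + 1 - w.length)).filter
          (fun i => List.take w.length (List.drop i (List.ofFn x)) = w)).card := by
    intro x
    rw [occCount, List.length_ofFn]
    exact countP_range_eq _ _
  have expand : ∀ x : Fin n → A,
      (if occCount w (List.ofFn x) = s then ∏ i, P (x i) else 0)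
      = ∑ T ∈ (Finset.range (n + 1 - w.length)).powerset,
          ((if T ⊆ (Finset.range (n + 1 - w.length)).filter
              (fun i => List.take w.length (List.drop i (List.ofFn x)) = w)
            then ((-1:ℝ))^(T.card - s) * (T.card.choose s : ℕ) else 0) * ∏ i, P (x i)) := by
    intro x
    rw [← Finset.sum_mul,
      ← indicator_expand (n + 1 - w.length) s _ (Finset.filter_subset _ _), hOcc x,
      ite_mul, one_mul, zero_mul]
  have unfold1 : strProb P n (fun x => occCount w (List.ofFn x) = s)
      = ∑ x : Fin n → A, (if occCount w (List.ofFn x) = s then ∏ i, P (x i) else 0) := by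
    rw [strProb]
    exact Finset.sum_congr rfl fun x _ => ite_congr rfl (fun _ => rfl) (fun _ => rfl)
  rw [unfold1]
  have swap : (∑ x : Fin n → A, (if occCount w (List.ofFn x) = s then ∏ i, P (x i) else 0))
      = ∑ T ∈ (Finset.range (n + 1 - w.length)).powerset, ∑ x : Fin n → A,
          ((if T ⊆ (Finset.range (n + 1 - w.length)).filter
              (fun i => List.take w.length (List.drop i (List.ofFn x)) = w)
            then ((-1:ℝ))^(T.card - s) * (T.card.choose s : ℕ) else 0) * ∏ i, P (x i)) := by
    rw [← Finset.sum_comm]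
    exact Finset.sum_congr rfl fun x _ => expand x
  rw [swap]
  have step2 : ∀ T ∈ (Finset.range (n + 1 - w.length)).powerset,
      (∑ x : Fin n → A, ((if T ⊆ (Finset.range (n + 1 - w.length)).filter
              (fun i => List.take w.length (List.drop i (List.ofFn x)) = w)
            then ((-1:ℝ))^(T.card - s) * (T.card.choose s : ℕ) else 0) * ∏ i, P (x i)))
      = (if Sparse w.length T
          then ((-1:ℝ))^(T.card - s) * (T.card.choose s : ℕ) * wordProb P w ^ T.card else 0) := by
    intro T hT
    rw [Finset.mem_powerset] at hT
    have hQ := Q_eval P hP1 n w hw hno T hT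
    have h1 : ∀ x : Fin n → A, ((if T ⊆ (Finset.range (n + 1 - w.length)).filter
              (fun i => List.take w.length (List.drop i (List.ofFn x)) = w)
            then ((-1:ℝ))^(T.card - s) * (T.card.choose s : ℕ) else 0) * ∏ i, P (x i))
        = ((-1:ℝ))^(T.card - s) * (T.card.choose s : ℕ) *
            (if T ⊆ (Finset.range (n + 1 - w.length)).filter
              (fun i => List.take w.length (List.drop i (List.ofFn x)) = w)
            then ∏ i, P (x i) else 0) := by
      intro x
      by_cases hc : T ⊆ (Finset.range (n + 1 - w.length)).filter
          (fun i => List.take w.length (List.drop i (List.ofFn x)) = w)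
      · rw [if_pos hc, if_pos hc]
      · rw [if_neg hc, if_neg hc, zero_mul, mul_zero]
    have e1 : (∑ x : Fin n → A, ((if T ⊆ (Finset.range (n + 1 - w.length)).filter
              (fun i => List.take w.length (List.drop i (List.ofFn x)) = w)
            then ((-1:ℝ))^(T.card - s) * (T.card.choose s : ℕ) else 0) * ∏ i, P (x i)))
        = ∑ x : Fin n → A, (((-1:ℝ))^(T.card - s) * (T.card.choose s : ℕ) *
            (if T ⊆ (Finset.range (n + 1 - w.length)).filter
              (fun i => List.take w.length (List.drop i (List.ofFn x)) = w)
            then ∏ i, P (x i) else 0)) := Finset.sum_congr rfl fun x _ => h1 x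
    rw [e1, ← Finset.mul_sum, hQ]
    by_cases hsp : Sparse w.length T
    · rw [if_pos hsp, if_pos hsp, mul_assoc]
    · rw [if_neg hsp, if_neg hsp, mul_zero]
  have e2 : (∑ T ∈ (Finset.range (n + 1 - w.length)).powerset, ∑ x : Fin n → A,
          ((if T ⊆ (Finset.range (n + 1 - w.length)).filter
              (fun i => List.take w.length (List.drop i (List.ofFn x)) = w)
            then ((-1:ℝ))^(T.card - s) * (T.card.choose s : ℕ) else 0) * ∏ i, P (x i)))
      = ∑ T ∈ (Finset.range (n + 1 - w.length)).powerset,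
          (if Sparse w.length T
            then ((-1:ℝ))^(T.card - s) * (T.card.choose s : ℕ) * wordProb P w ^ T.card
            else 0) := Finset.sum_congr rfl step2
  rw [e2]
  rw [Finset.sum_powerset, Finset.card_range]
  have step3 : ∀ k ∈ Finset.range ((n + 1 - w.length) + 1),
      (∑ T ∈ Finset.powersetCard k (Finset.range (n + 1 - w.length)),
        (if Sparse w.length T
          then ((-1:ℝ))^(T.card - s) * (T.card.choose s : ℕ) * wordProb P w ^ T.card else 0))
      = (if s ≤ k ∧ w.length * k ≤ n then
          (-1 : ℝ) ^ (k - s) *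
            (((n - w.length * k + k).choose k * k.choose s : ℕ) : ℝ) *
            wordProb P w ^ k
        else 0) := by
    intro k hk
    have hcongr : ∀ T ∈ Finset.powersetCard k (Finset.range (n + 1 - w.length)),
        (if Sparse w.length T
          then ((-1:ℝ))^(T.card - s) * (T.card.choose s : ℕ) * wordProb P w ^ T.card else 0)
        = (if Sparse w.length T
          then ((-1:ℝ))^(k - s) * (k.choose s : ℕ) * wordProb P w ^ k else 0) := by
      intro T hT
      rw [(Finset.mem_powersetCard.1 hT).2]
    rw [Finset.sum_congr rfl hcongr, ← Finset.sum_filter, Finset.sum_const,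
      sparse_count w.length n k hℓ]
    by_cases h1 : w.length * k ≤ n
    · rw [if_pos h1]
      by_cases h2 : s ≤ k
      · rw [if_pos ⟨h2, h1⟩]
        push_cast
        ring
      · rw [if_neg (fun hc => h2 hc.1), Nat.choose_eq_zero_of_lt (show k < s by omega)]
        push_cast
        ring
    · rw [if_neg h1, if_neg (fun hc => h1 hc.2), zero_smul]
  have e3 := Finset.sum_congr rfl step3
  rw [e3]
  apply Finset.sum_subset
  · intro k hk
    rw [Finset.mem_range] at *
    omega
  · intro k hk hk'
    rw [Finset.mem_range] at hk
    rw [Finset.mem_range] at hk'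
    rw [if_neg]
    rintro ⟨hsk, hkn⟩
    push_neg at hk'
    have h1 : k - 1 ≤ w.length * (k - 1) := Nat.le_mul_of_pos_left _ (by omega)
    have h2 : w.length * k = w.length * (k - 1) + w.length := by
      rw [← Nat.mul_succ]
      congr 1
      omega
    omega
end
end

section
/- Let A(k) = C(n - |w|k + k, k) · P(w)^k be the probability-weighted count of placements of k nonoverlapping copies of w in a string of length n, and B(t) = P(N(w; X₁…Xₙ) = t) be the exact probability of t occurrences. If w is a nonoverlapping word, then for every k, A(k) = Σ_{t ≥ k} B(t) · C(t, k). -/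
open Finset
open scoped BigOperators Classical

noncomputable section

section Count
variable {k : ℕ}

/-- gap-m spread condition -/
def Spread (m : ℕ) (S : Finset ℕ) : Prop := ∀ s ∈ S, ∀ t ∈ S, s < t → s + m ≤ t

lemma eq_image_enum (S : Finset ℕ) (h : S.card = k) :
    S = image (S.orderEmbOfFin h) univ := by
  ext a
  simp only [mem_image, mem_univ, true_and]
  rw [← Finset.mem_coe, ← Finset.range_orderEmbOfFin S h]
  exact Set.mem_range

lemma rank_eq (f : Fin k → ℕ) (hf : StrictMono f) (j : Fin k) :
    ((image f univ).filter (fun t => t < f j)).card = j := by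
  have : (image f univ).filter (fun t => t < f j) = image f (univ.filter (fun i => i < j)) := by
    ext a
    simp only [mem_filter, mem_image, mem_univ, true_and]
    constructor
    · rintro ⟨⟨i, rfl⟩, hlt⟩; exact ⟨i, hf.lt_iff_lt.mp hlt, rfl⟩
    · rintro ⟨i, hij, rfl⟩; exact ⟨⟨i, rfl⟩, hf.lt_iff_lt.mpr hij⟩
  rw [this, Finset.card_image_of_injective _ hf.injective]
  have : univ.filter (fun i : Fin k => i < j) = Finset.Iio j := by ext a; simp
  rw [this, Fin.card_Iio]

lemma map_enum (f : Fin k → ℕ) (hf : StrictMono f) (h : ℕ → ℕ → ℕ) :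
    (image f univ).image
      (fun s => h s (((image f univ).filter (fun t => t < s)).card))
    = image (fun j : Fin k => h (f j) j) univ := by
  rw [Finset.image_image]
  apply Finset.image_congr
  intro j _
  simp only [Function.comp_apply]
  rw [rank_eq f hf]

lemma growth (f : Fin k → ℕ) (b : ℕ) (h : ∀ i j : Fin k, i < j → f i + b ≤ f j) :
    ∀ i j : Fin k, (i:ℕ) ≤ (j:ℕ) → f i + b * ((j:ℕ) - (i:ℕ)) ≤ f j := by
  intro i j hij
  obtain ⟨d, hd⟩ : ∃ d, (j:ℕ) = (i:ℕ) + d := ⟨(j:ℕ) - i, by omega⟩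
  clear hij
  induction d generalizing j with
  | zero => have : j = i := Fin.ext (by omega); subst this; simp
  | succ d ih =>
      have hj' : (i:ℕ) + d < k := by omega
      have h1 := ih ⟨(i:ℕ) + d, hj'⟩ rfl
      have h2 : f ⟨(i:ℕ)+d, hj'⟩ + b ≤ f j := h _ _ (by simp [Fin.lt_def, hd])
      simp only at h1 ⊢
      have e2 : (i:ℕ) + (d+1) - (i:ℕ) = ((i:ℕ) + d - (i:ℕ)) + 1 := by omega
      rw [hd, e2, Nat.mul_succ]
      omega

end Count

section CS
variable {c k n : ℕ}

lemma shrink_mem (S : Finset ℕ) (hS : S ∈ ((range (n+1-(c+1))).powersetCard k).filter (Spread (c+1)))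
    (hk : (c+1) * k ≤ n) :
    S.image (fun s => s - c * ((S.filter (fun t => t < s)).card)) ∈
      (range (n - (c+1)*k + k)).powersetCard k := by
  rw [mem_filter, mem_powersetCard] at hS
  obtain ⟨⟨hsub, hcard⟩, hsp⟩ := hS
  set f : Fin k → ℕ := ⇑(S.orderEmbOfFin hcard) with hf
  have hmono : StrictMono f := (S.orderEmbOfFin hcard).strictMono
  have hSim : S = image f univ := eq_image_enum S hcard
  have hmem : ∀ j, f j ∈ S := fun j => S.orderEmbOfFin_mem hcard j
  have hstep : ∀ i j : Fin k, i < j → f i + (c+1) ≤ f j := fun i j hij =>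
    hsp _ (hmem i) _ (hmem j) (hmono hij)
  have G := growth f (c+1) hstep
  have hlow : ∀ j : Fin k, (c+1) * (j:ℕ) ≤ f j := by
    intro j
    have h0 : (0:ℕ) < k := lt_of_le_of_lt (Nat.zero_le _) j.isLt
    have h := G ⟨0, h0⟩ j (Nat.zero_le _)
    have h0' : ((⟨0,h0⟩ : Fin k) : ℕ) = 0 := rfl
    rw [h0', Nat.sub_zero] at h
    omega
  have hg : StrictMono (fun j : Fin k => f j - c * (j:ℕ)) := by
    intro i j hij
    have h1 := G i j (le_of_lt hij)
    have h2 := hlow i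
    have hij' : (i:ℕ) < (j:ℕ) := hij
    have e1 : (c+1) * ((j:ℕ)-(i:ℕ)) = c*((j:ℕ)-(i:ℕ)) + ((j:ℕ)-(i:ℕ)) := by ring
    have e2 : (c+1) * (i:ℕ) = c*(i:ℕ) + (i:ℕ) := by ring
    have e3 : c*(j:ℕ) = c*(i:ℕ) + c*((j:ℕ)-(i:ℕ)) := by
      rw [← Nat.mul_add]; congr 1; omega
    simp only
    omega
  rw [hSim, map_enum f hmono (fun s r => s - c * r)]
  rw [mem_powersetCard]
  constructor
  · intro a ha
    rw [mem_image] at ha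
    obtain ⟨j, _, rfl⟩ := ha
    have hklt : (0:ℕ) < k := lt_of_le_of_lt (Nat.zero_le _) j.isLt
    have hlast : ((k:ℕ) - 1) < k := by omega
    have h1 := G j ⟨k-1, hlast⟩ (by simp; omega)
    have h2 : f ⟨k-1, hlast⟩ ∈ range (n+1-(c+1)) := hsub (hmem _)
    rw [mem_range] at h2
    simp only at h1 h2 ⊢
    have hjk : (j:ℕ) ≤ k - 1 := by omega
    have e4 : (c+1)*(k-1-(j:ℕ)) + (c+1)*(j:ℕ) + (c+1)*1 = (c+1)*k := by
      rw [← Nat.mul_add, ← Nat.mul_add]; congr 1; omega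
    have e2 : (c+1) * (j:ℕ) = c*(j:ℕ) + (j:ℕ) := by ring
    rw [mem_range]
    omega
  · rw [Finset.card_image_of_injective _ hg.injective, card_univ, Fintype.card_fin]

lemma stretch_mem (T : Finset ℕ) (hT : T ∈ (range (n - (c+1)*k + k)).powersetCard k)
    (hk : (c+1) * k ≤ n) :
    T.image (fun t => t + c * ((T.filter (fun u => u < t)).card)) ∈
      ((range (n+1-(c+1))).powersetCard k).filter (Spread (c+1)) := by
  rw [mem_powersetCard] at hT
  obtain ⟨hsub, hcard⟩ := hT
  set f : Fin k → ℕ := ⇑(T.orderEmbOfFin hcard) with hf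
  have hmono : StrictMono f := (T.orderEmbOfFin hcard).strictMono
  have hTim : T = image f univ := eq_image_enum T hcard
  have hmem : ∀ j, f j ∈ T := fun j => T.orderEmbOfFin_mem hcard j
  have hg : StrictMono (fun j : Fin k => f j + c * (j:ℕ)) := by
    intro i j hij
    have h1 : f i < f j := hmono hij
    have h2 : c * (i:ℕ) ≤ c * (j:ℕ) := Nat.mul_le_mul_left c (le_of_lt hij)
    simp only
    omega
  rw [hTim, map_enum f hmono (fun s r => s + c * r)]
  rw [mem_filter, mem_powersetCard]
  refine ⟨⟨?_, ?_⟩, ?_⟩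
  · intro a ha
    rw [mem_image] at ha
    obtain ⟨j, _, rfl⟩ := ha
    have hklt : (0:ℕ) < k := lt_of_le_of_lt (Nat.zero_le _) j.isLt
    have h2 : f j ∈ range (n - (c+1)*k + k) := hsub (hmem _)
    rw [mem_range] at h2
    have hjk : (j:ℕ) ≤ k - 1 := by omega
    have h3 : c * (j:ℕ) ≤ c * (k-1) := Nat.mul_le_mul_left c hjk
    have e5 : (c+1)*k = c*(k-1) + c + k := by
      have h4 : k - 1 + 1 = k := by omega
      calc (c+1)*k = c*k + k := by ring
        _ = c*((k-1)+1) + k := by rw [h4]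
        _ = c*(k-1) + c + k := by ring
    rw [mem_range]
    omega
  · rw [Finset.card_image_of_injective _ hg.injective, card_univ, Fintype.card_fin]
  · intro s hs t ht hst
    rw [mem_image] at hs ht
    obtain ⟨i, _, rfl⟩ := hs
    obtain ⟨j, _, rfl⟩ := ht
    have hij : i < j := by
      by_contra hc
      push_neg at hc
      have : (fun j : Fin k => f j + c * (j:ℕ)) j ≤ (fun j : Fin k => f j + c * (j:ℕ)) i :=
        hg.monotone hc
      simp only at this hst
      omega
    have h1 : f i < f j := hmono hij
    have h2 : c * ((i:ℕ)+1) ≤ c * (j:ℕ) := Nat.mul_le_mul_left c (by exact hij)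
    have e6 : c * ((i:ℕ)+1) = c*(i:ℕ) + c := by ring
    omega
end CS

section CS2
variable {c k n : ℕ}

lemma left_inv_spread (S : Finset ℕ)
    (hS : S ∈ ((range (n+1-(c+1))).powersetCard k).filter (Spread (c+1))) :
    ((S.image (fun s => s - c * ((S.filter (fun t => t < s)).card))).image
      (fun t => t + c * (((S.image (fun s => s - c * ((S.filter (fun t => t < s)).card))).filter
        (fun u => u < t)).card))) = S := by
  rw [mem_filter, mem_powersetCard] at hS
  obtain ⟨⟨hsub, hcard⟩, hsp⟩ := hS
  set f : Fin k → ℕ := ⇑(S.orderEmbOfFin hcard) with hf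
  have hmono : StrictMono f := (S.orderEmbOfFin hcard).strictMono
  have hSim : S = image f univ := eq_image_enum S hcard
  have hmem : ∀ j, f j ∈ S := fun j => S.orderEmbOfFin_mem hcard j
  have hstep : ∀ i j : Fin k, i < j → f i + (c+1) ≤ f j := fun i j hij =>
    hsp _ (hmem i) _ (hmem j) (hmono hij)
  have G := growth f (c+1) hstep
  have hlow : ∀ j : Fin k, (c+1) * (j:ℕ) ≤ f j := by
    intro j
    have h0 : (0:ℕ) < k := lt_of_le_of_lt (Nat.zero_le _) j.isLt
    have h := G ⟨0, h0⟩ j (Nat.zero_le _)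
    have h0' : ((⟨0,h0⟩ : Fin k) : ℕ) = 0 := rfl
    rw [h0', Nat.sub_zero] at h
    omega
  have hg : StrictMono (fun j : Fin k => f j - c * (j:ℕ)) := by
    intro i j hij
    have h1 := G i j (le_of_lt hij)
    have h2 := hlow i
    have hij' : (i:ℕ) < (j:ℕ) := hij
    have e1 : (c+1) * ((j:ℕ)-(i:ℕ)) = c*((j:ℕ)-(i:ℕ)) + ((j:ℕ)-(i:ℕ)) := by ring
    have e2 : (c+1) * (i:ℕ) = c*(i:ℕ) + (i:ℕ) := by ring
    have e3 : c*(j:ℕ) = c*(i:ℕ) + c*((j:ℕ)-(i:ℕ)) := by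
      rw [← Nat.mul_add]; congr 1; omega
    simp only
    omega
  conv_lhs => rw [hSim, map_enum f hmono (fun s r => s - c * r)]
  rw [map_enum _ hg (fun t r => t + c * r)]
  conv_rhs => rw [hSim]
  apply Finset.image_congr
  intro j _
  have h2 := hlow j
  have e2 : (c+1) * (j:ℕ) = c*(j:ℕ) + (j:ℕ) := by ring
  simp only
  omega

lemma right_inv_spread (T : Finset ℕ)
    (hT : T ∈ (range (n - (c+1)*k + k)).powersetCard k) :
    ((T.image (fun t => t + c * ((T.filter (fun u => u < t)).card))).image
      (fun s => s - c * (((T.image (fun t => t + c * ((T.filter (fun u => u < t)).card))).filter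
        (fun u => u < s)).card))) = T := by
  rw [mem_powersetCard] at hT
  obtain ⟨hsub, hcard⟩ := hT
  set f : Fin k → ℕ := ⇑(T.orderEmbOfFin hcard) with hf
  have hmono : StrictMono f := (T.orderEmbOfFin hcard).strictMono
  have hTim : T = image f univ := eq_image_enum T hcard
  have hg : StrictMono (fun j : Fin k => f j + c * (j:ℕ)) := by
    intro i j hij
    have h1 : f i < f j := hmono hij
    have h2 : c * (i:ℕ) ≤ c * (j:ℕ) := Nat.mul_le_mul_left c (le_of_lt hij)
    simp only
    omega
  conv_lhs => rw [hTim, map_enum f hmono (fun s r => s + c * r)]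
  rw [map_enum _ hg (fun t r => t - c * r)]
  conv_rhs => rw [hTim]
  apply Finset.image_congr
  intro j _
  simp only
  omega

lemma card_spread (m k n : ℕ) (hm : 1 ≤ m) (hk : m * k ≤ n) :
    (((range (n+1-m)).powersetCard k).filter (Spread m)).card = (n - m*k + k).choose k := by
  obtain ⟨c, rfl⟩ : ∃ c, m = c + 1 := ⟨m - 1, by omega⟩
  rw [← Finset.card_range (n - (c+1)*k + k), ← Finset.card_powersetCard]
  exact Finset.card_bij'
    (fun S _ => S.image (fun s => s - c * ((S.filter (fun t => t < s)).card)))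
    (fun T _ => T.image (fun t => t + c * ((T.filter (fun u => u < t)).card)))
    (fun S hS => shrink_mem S hS hk)
    (fun T hT => stretch_mem T hT hk)
    (fun S hS => left_inv_spread S hS)
    (fun T hT => right_inv_spread T hT)
end CS2

lemma prod_fix {A : Type*} [Fintype A] [DecidableEq A] (P : A → ℝ) (hP1 : ∑ a, P a = 1) (n : ℕ)
    (T : Finset (Fin n)) (f : Fin n → A) :
    ∑ x : Fin n → A, (if ∀ p ∈ T, x p = f p then ∏ i, P (x i) else 0)
      = ∏ p ∈ T, P (f p) := by
  have h := Fintype.prod_sum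
    (fun (i : Fin n) (a : A) => if i ∈ T then (if a = f i then P a else 0) else P a)
  have hL : ∏ i, ∑ a, (if i ∈ T then (if a = f i then P a else 0) else P a)
      = ∏ p ∈ T, P (f p) := by
    have : ∀ i : Fin n, (∑ a, (if i ∈ T then (if a = f i then P a else 0) else P a))
        = if i ∈ T then P (f i) else 1 := by
      intro i
      by_cases hi : i ∈ T
      · simp only [hi, if_true]
        rw [Finset.sum_ite_eq' univ (f i) P]
        simp
      · simp only [hi, if_false]
        exact hP1
    rw [Finset.prod_congr rfl (fun i _ => this i)]
    rw [Finset.prod_ite_mem univ T (fun i => P (f i)), Finset.univ_inter]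
  have hR : ∀ x : Fin n → A,
      (∏ i, (if i ∈ T then (if x i = f i then P (x i) else 0) else P (x i)))
      = (if ∀ p ∈ T, x p = f p then ∏ i, P (x i) else 0) := by
    intro x
    by_cases hx : ∀ p ∈ T, x p = f p
    · rw [if_pos hx]
      apply Finset.prod_congr rfl
      intro i _
      by_cases hi : i ∈ T
      · simp [hi, hx i hi]
      · simp [hi]
    · push_neg at hx
      obtain ⟨p, hp, hne⟩ := hx
      rw [if_neg (by push_neg; exact ⟨p, hp, hne⟩)]
      apply Finset.prod_eq_zero (Finset.mem_univ p)
      simp [hp, hne]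
  rw [← hL, h]
  apply Finset.sum_congr rfl
  intro x _
  exact (hR x).symm


section Occ
variable {A : Type*} [DecidableEq A]

lemma occCount_card (w y : List A) :
    occCount w y = ((Finset.range (y.length + 1 - w.length)).filter
      (fun i => (y.drop i).take w.length = w)).card := by
  rw [occCount, List.countP_eq_length_filter]
  rfl

lemma occ_char (w l : List A) (i : ℕ) (h : i + w.length ≤ l.length) :
    (l.drop i).take w.length = w ↔
      ∀ j (hj : j < w.length), l[i+j]'(by omega) = w[j] := by
  constructor
  · intro he j hj
    have := congrArg (fun t => t[j]?) he
    simpa [List.getElem?_take, List.getElem?_drop, hj, List.getElem?_eq_getElem,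
      (by omega : i + j < l.length), (by omega : j < l.length - i)] using this
  · intro hp
    apply List.ext_getElem
    · simp; omega
    · intro j h1 h2
      simp only [List.getElem_take, List.getElem_drop]
      exact hp j h2

lemma no_overlap (w : List A) (hno : Nonoverlapping w) (l : List A) (s t : ℕ)
    (hst : s < t) (hover : t < s + w.length) (ht : t + w.length ≤ l.length)
    (hs_occ : (l.drop s).take w.length = w) (ht_occ : (l.drop t).take w.length = w) :
    False := by
  set m := w.length with hm
  set z := (l.drop s).take (t - s + m) with hz
  have hzlen : z.length = t - s + m := by
    rw [hz, List.length_take, List.length_drop]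
    omega
  apply hno
  refine ⟨z, by omega, ?_⟩
  rw [occCount_card]
  have h0 : 0 ∈ (Finset.range (z.length + 1 - m)).filter
      (fun i => (z.drop i).take m = w) := by
    rw [Finset.mem_filter, Finset.mem_range]
    refine ⟨by omega, ?_⟩
    rw [List.drop_zero, hz, List.take_take, Nat.min_eq_left (by omega)]
    exact hs_occ
  have h1 : t - s ∈ (Finset.range (z.length + 1 - m)).filter
      (fun i => (z.drop i).take m = w) := by
    rw [Finset.mem_filter, Finset.mem_range]
    refine ⟨by omega, ?_⟩
    rw [hz, List.drop_take, List.drop_drop]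
    have e1 : s + (t - s) = t := by omega
    have e2 : t - s + m - (t - s) = m := by omega
    rw [e1, e2, List.take_take, Nat.min_eq_left le_rfl]
    exact ht_occ
  calc (2:ℕ) = ({0, t-s} : Finset ℕ).card := by
        rw [Finset.card_pair (by omega)]
      _ ≤ _ := Finset.card_le_card (by
        intro a ha
        rw [Finset.mem_insert, Finset.mem_singleton] at ha
        rcases ha with rfl | rfl
        · exact h0
        · exact h1)

end Occ


lemma wordProb_eq_prod {A : Type*} (P : A → ℝ) (w : List A) (d : A) :
    ∏ j ∈ Finset.range w.length, P (w.getD j d) = wordProb P w := by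
  rw [wordProb]
  conv_rhs => rw [← List.ofFn_get w]
  rw [List.map_ofFn, List.prod_ofFn]
  rw [← Fin.prod_univ_eq_prod_range (fun j => P (w.getD j d)) w.length]
  apply Finset.prod_congr rfl
  intro j _
  simp only [Function.comp_apply, List.get_eq_getElem]
  rw [List.getD_eq_getElem w d j.isLt]

lemma spread_prob {A : Type*} [Fintype A] [DecidableEq A] (P : A → ℝ)
    (hP1 : ∑ a, P a = 1) (n : ℕ) (w : List A) (hw : w ≠ []) (k : ℕ) (S : Finset ℕ)
    (hsub : S ⊆ Finset.range (n + 1 - w.length)) (hsp : Spread w.length S)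
    (hcard : S.card = k) :
    ∑ x : Fin n → A, (if S ⊆ (Finset.range (n + 1 - w.length)).filter
        (fun i => ((List.ofFn x).drop i).take w.length = w) then ∏ i, P (x i) else 0)
      = wordProb P w ^ k := by
  set m := w.length with hm
  set d := w.head hw with hd
  have hm1 : 1 ≤ m := by
    rw [hm]; cases w with
    | nil => exact absurd rfl hw
    | cons a l => simp
  have hbound : ∀ s ∈ S, s + m ≤ n := by
    intro s hs
    have := Finset.mem_range.mp (hsub hs)
    omega
  have huniq : ∀ s ∈ S, ∀ s' ∈ S, ∀ p : ℕ, s ≤ p → p < s + m → s' ≤ p → p < s' + m →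
      s = s' := by
    intro s hs s' hs' p h1 h2 h3 h4
    rcases lt_trichotomy s s' with h | h | h
    · have := hsp s hs s' hs' h; omega
    · exact h
    · have := hsp s' hs' s hs h; omega
  set g : ℕ → A := fun p =>
    if h : ∃ s ∈ S, s ≤ p ∧ p < s + m then w.getD (p - h.choose) d else d with hgdef
  have hg_spec : ∀ s ∈ S, ∀ p : ℕ, s ≤ p → p < s + m → g p = w.getD (p - s) d := by
    intro s hs p h1 h2
    have hex : ∃ s ∈ S, s ≤ p ∧ p < s + m := ⟨s, hs, h1, h2⟩
    rw [hgdef]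
    simp only [dif_pos hex]
    obtain ⟨hc1, hc2, hc3⟩ := hex.choose_spec
    rw [huniq _ hex.choose_spec.1 _ hs p hc2 hc3 h1 h2]
  set T : Finset (Fin n) :=
    Finset.univ.filter (fun p : Fin n => ∃ s ∈ S, s ≤ (p:ℕ) ∧ (p:ℕ) < s + m) with hT
  have hlen : ∀ x : Fin n → A, (List.ofFn x).length = n := fun x => by simp
  have hiff : ∀ x : Fin n → A,
      (S ⊆ (Finset.range (n + 1 - m)).filter
        (fun i => ((List.ofFn x).drop i).take m = w)) ↔ (∀ p ∈ T, x p = g (p:ℕ)) := by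
    intro x
    constructor
    · intro hSx p hp
      rw [hT, Finset.mem_filter] at hp
      obtain ⟨-, s, hs, h1, h2⟩ := hp
      have hocc := (Finset.mem_filter.mp (hSx hs)).2
      have hsm : s + m ≤ (List.ofFn x).length := by rw [hlen]; exact hbound s hs
      have := (occ_char w (List.ofFn x) s hsm).mp hocc ((p:ℕ) - s) (by omega)
      have e : s + ((p:ℕ) - s) = (p:ℕ) := by omega
      rw [hg_spec s hs p h1 h2, List.getD_eq_getElem w d (by omega : (p:ℕ) - s < m)]
      rw [← this]
      congr 1
      · simp [List.getElem_ofFn, e]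
    · intro hxg s hs
      refine Finset.mem_filter.mpr ⟨hsub hs, ?_⟩
      have hsm : s + m ≤ (List.ofFn x).length := by rw [hlen]; exact hbound s hs
      rw [occ_char w (List.ofFn x) s hsm]
      intro j hj
      have hp : s + j < n := by have := hbound s hs; omega
      have hpT : (⟨s + j, hp⟩ : Fin n) ∈ T := by
        rw [hT, Finset.mem_filter]
        exact ⟨Finset.mem_univ _, s, hs, by simp, by simp; omega⟩
      have := hxg _ hpT
      rw [hg_spec s hs (s+j) (by omega) (by simp; omega)] at this
      rw [List.getD_eq_getElem w d (by omega : s + j - s < m)] at this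
      simp [List.getElem_ofFn]
      rw [this]
      congr 1
      omega
  have step1 : ∑ x : Fin n → A, (if S ⊆ (Finset.range (n + 1 - m)).filter
        (fun i => ((List.ofFn x).drop i).take m = w) then ∏ i, P (x i) else 0)
      = ∑ x : Fin n → A, (if ∀ p ∈ T, x p = g (p:ℕ) then ∏ i, P (x i) else 0) := by
    apply Finset.sum_congr rfl
    intro x _
    rw [if_congr (hiff x) rfl rfl]
  rw [step1]
  rw [show (∑ x : Fin n → A, if ∀ p ∈ T, x p = g (p:ℕ) then ∏ i, P (x i) else 0)
      = ∏ p ∈ T, P (g (p:ℕ)) from prod_fix P hP1 n T (fun p => g (p:ℕ))]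
  set T' : Finset ℕ := S.biUnion (fun s => Finset.Ico s (s + m)) with hT'
  have step2 : ∏ p ∈ T, P (g (p:ℕ)) = ∏ i ∈ T', P (g i) := by
    apply Finset.prod_bij (fun (p : Fin n) _ => (p : ℕ))
    · intro p hp
      rw [hT, Finset.mem_filter] at hp
      obtain ⟨-, s, hs, h1, h2⟩ := hp
      exact Finset.mem_biUnion.mpr ⟨s, hs, Finset.mem_Ico.mpr ⟨h1, h2⟩⟩
    · intro p _ q _ h
      exact Fin.ext h
    · intro i hi
      obtain ⟨s, hs, hIco⟩ := Finset.mem_biUnion.mp hi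
      rw [Finset.mem_Ico] at hIco
      have hin : i < n := by have := hbound s hs; omega
      refine ⟨⟨i, hin⟩, ?_, rfl⟩
      rw [hT, Finset.mem_filter]
      exact ⟨Finset.mem_univ _, s, hs, hIco.1, hIco.2⟩
    · intro p _
      rfl
  rw [step2]
  have hdisj : (↑S : Set ℕ).PairwiseDisjoint (fun s => Finset.Ico s (s + m)) := by
    intro s hs s' hs' hne
    simp only [Function.onFun]
    rw [Finset.disjoint_left]
    intro a ha ha'
    rw [Finset.mem_Ico] at ha ha'
    exact hne (huniq s hs s' hs' a ha.1 ha.2 ha'.1 ha'.2)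
  rw [hT', Finset.prod_biUnion hdisj]
  have step3 : ∀ s ∈ S, ∏ i ∈ Finset.Ico s (s + m), P (g i) = wordProb P w := by
    intro s hs
    have inner : ∏ i ∈ Finset.Ico s (s + m), P (g i)
        = ∏ i ∈ Finset.Ico s (s + m), P (w.getD (i - s) d) := by
      apply Finset.prod_congr rfl
      intro i hi
      rw [Finset.mem_Ico] at hi
      rw [hg_spec s hs i hi.1 hi.2]
    rw [inner, Finset.prod_Ico_eq_prod_range]
    have e : s + m - s = m := by omega
    rw [e, ← wordProb_eq_prod P w d]
    apply Finset.prod_congr rfl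
    intro j _
    have e2 : s + j - s = j := by omega
    rw [e2]
  rw [Finset.prod_congr rfl step3, Finset.prod_const, hcard]

/-- `A(k) = C(n-|w|k+k, k)·P(w)^k = Σ_{t ≥ k} B(t)·C(t,k)` for a nonoverlapping word. -/
theorem stmt2 {A : Type*} [Fintype A] [DecidableEq A] (P : A → ℝ)
    (hP0 : ∀ a, 0 ≤ P a) (hP1 : ∑ a, P a = 1)
    (n : ℕ) (w : List A) (hw : w ≠ []) (hno : Nonoverlapping w)
    (k : ℕ) (hk : w.length * k ≤ n) :
    ((n - w.length * k + k).choose k : ℝ) * wordProb P w ^ k =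
      ∑ t ∈ Finset.Icc k n,
        strProb P n (fun x => occCount w (List.ofFn x) = t) * (t.choose k : ℕ) := by
  set m := w.length with hm
  have hm1 : 1 ≤ m := by
    rw [hm]; cases w with
    | nil => exact absurd rfl hw
    | cons a l => simp
  set OS : (Fin n → A) → Finset ℕ := fun x =>
    (Finset.range (n + 1 - m)).filter (fun i => ((List.ofFn x).drop i).take m = w)
    with hOS
  have hocc : ∀ x : Fin n → A, occCount w (List.ofFn x) = (OS x).card := by
    intro x
    rw [occCount_card, hOS]
    simp only [List.length_ofFn]
    rfl
  have hocc_le : ∀ x : Fin n → A, occCount w (List.ofFn x) ≤ n := by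
    intro x
    rw [hocc]
    calc (OS x).card ≤ (Finset.range (n + 1 - m)).card := Finset.card_le_card
          (Finset.filter_subset _ _)
      _ ≤ n := by rw [Finset.card_range]; omega
  -- rewrite the right-hand side as a single sum over strings
  have step1 : ∑ t ∈ Finset.Icc k n,
        strProb P n (fun x => occCount w (List.ofFn x) = t) * (t.choose k : ℕ)
      = ∑ x : Fin n → A, (∏ i, P (x i)) * ((occCount w (List.ofFn x)).choose k : ℝ) := by
    simp only [strProb, Finset.sum_mul]
    rw [Finset.sum_comm]
    apply Finset.sum_congr rfl
    intro x _
    simp only [ite_mul, zero_mul]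
    rw [Finset.sum_ite_eq (Finset.Icc k n)
      (occCount w (List.ofFn x)) (fun t => (∏ i, P (x i)) * ((t.choose k : ℕ) : ℝ))]
    by_cases hmem : occCount w (List.ofFn x) ∈ Finset.Icc k n
    · rw [if_pos hmem]
    · rw [if_neg hmem]
      rw [Finset.mem_Icc] at hmem
      push_neg at hmem
      have hlt : occCount w (List.ofFn x) < k := by
        by_cases h2 : k ≤ occCount w (List.ofFn x)
        · exact absurd (hmem h2) (by push_neg; exact hocc_le x)
        · omega
      rw [Nat.choose_eq_zero_of_lt hlt]
      simp
  rw [step1]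
  -- express the binomial coefficient as a sum over k-subsets
  have step2 : ∀ x : Fin n → A,
      (∏ i, P (x i)) * ((occCount w (List.ofFn x)).choose k : ℝ)
      = ∑ S ∈ (Finset.range (n + 1 - m)).powersetCard k,
          (if S ⊆ OS x then ∏ i, P (x i) else 0) := by
    intro x
    have hps : ((Finset.range (n + 1 - m)).powersetCard k).filter (fun S => S ⊆ OS x)
        = (OS x).powersetCard k := by
      ext T
      simp only [Finset.mem_filter, Finset.mem_powersetCard]
      constructor
      · rintro ⟨⟨-, hc⟩, hsub⟩; exact ⟨hsub, hc⟩
      · rintro ⟨hsub, hc⟩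
        exact ⟨⟨hsub.trans (Finset.filter_subset _ _), hc⟩, hsub⟩
    rw [← Finset.sum_filter, hps, Finset.sum_const, nsmul_eq_mul,
      Finset.card_powersetCard, ← hocc x, mul_comm]
  rw [Finset.sum_congr rfl (fun x _ => step2 x), Finset.sum_comm]
  -- split according to whether the subset is spread out
  rw [← Finset.sum_filter_add_sum_filter_not
    ((Finset.range (n + 1 - m)).powersetCard k) (Spread m)]
  have hzero : ∑ S ∈ ((Finset.range (n + 1 - m)).powersetCard k).filter
        (fun S => ¬ Spread m S),
      (∑ x : Fin n → A, if S ⊆ OS x then ∏ i, P (x i) else 0) = 0 := by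
    apply Finset.sum_eq_zero
    intro S hS
    rw [Finset.mem_filter] at hS
    obtain ⟨hS, hnsp⟩ := hS
    apply Finset.sum_eq_zero
    intro x _
    rw [if_neg]
    intro hsub
    rw [Spread] at hnsp
    push_neg at hnsp
    obtain ⟨s, hs, t, ht, hlt, hgt⟩ := hnsp
    have hsx := Finset.mem_filter.mp (hsub hs)
    have htx := Finset.mem_filter.mp (hsub ht)
    have htr : t ∈ Finset.range (n + 1 - m) := htx.1
    rw [Finset.mem_range] at htr
    exact no_overlap w hno (List.ofFn x) s t hlt hgt
      (by rw [List.length_ofFn]; omega) hsx.2 htx.2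
  rw [hzero, add_zero]
  have hval : ∀ S ∈ ((Finset.range (n + 1 - m)).powersetCard k).filter (Spread m),
      (∑ x : Fin n → A, if S ⊆ OS x then ∏ i, P (x i) else 0) = wordProb P w ^ k := by
    intro S hS
    rw [Finset.mem_filter, Finset.mem_powersetCard] at hS
    exact spread_prob P hP1 n w hw k S hS.1.1 hS.2 hS.1.2
  rw [Finset.sum_congr rfl hval, Finset.sum_const, nsmul_eq_mul,
    card_spread m k n hm1 hk]
end
end

section
/- Let X₁,…,Xₙ be i.i.d. binary random variables with P(X_i = 1) = q and P(X_i = 0) = p = 1 - q, with q > 0. For increasing nonoverlapping words w_i = 1·0^{m_i} (a 1 followed by m_i zeros) with m₁ < … < m_h, and statistics C and D as defined, P(D_{n,(m₁,…,m_h)}(X₁…Xₙ) = t) = (P(C_{n+1,(w₁,…,w_h)}(X₁…X_{n+1}) = t) − p · P(C_{n,(w₁,…,w_h)}(X₁…Xₙ) = t)) / q for all t ≥ 0. -/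
open Finset
open scoped BigOperators Classical

noncomputable section

/-- `Cstat ws x = Σ i·kᵢ` where `(k₁,…,k_h) = N′(w₁,…,w_h; x)` is the
successive-difference vector of occurrence counts. -/
def Cstat {A : Type*} [DecidableEq A] {h : ℕ} (ws : Fin h → List A) (x : List A) : ℕ :=
  ∑ i : Fin h, (i.val + 1) *
    (occCount (ws i) x -
      if hlt : i.val + 1 < h then occCount (ws ⟨i.val + 1, hlt⟩) x else 0)

/-- The word `1·0^m`. -/
def runWord (m : ℕ) : List Bool := true :: List.replicate m false

/-- `Dstat ms x = C_{n+1,(1·0^{m₁},…,1·0^{m_h})}(1x)`. -/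
def Dstat {h : ℕ} (ms : Fin h → ℕ) (x : List Bool) : ℕ :=
  Cstat (fun i => runWord (ms i)) (true :: x)

lemma occCount_cons_false (w' y : List Bool) :
    occCount (true :: w') (false :: y) = occCount (true :: w') y := by
  unfold occCount
  simp only [List.length_cons]
  rcases le_or_gt (w'.length + 1) (y.length + 1) with hle | hlt
  · have hr : y.length + 1 + 1 - (w'.length + 1) = (y.length + 1 - (w'.length + 1)) + 1 := by
      omega
    rw [hr, List.range_succ_eq_map, List.countP_cons, List.countP_map]
    simp only [List.drop_zero, List.take_succ_cons]
    rw [if_neg (by simp), add_zero]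
    apply List.countP_congr
    intro j _
    simp [Function.comp, Nat.succ_eq_add_one, List.drop_succ_cons]
  · have h1 : y.length + 1 + 1 - (w'.length + 1) = 0 := by omega
    have h2 : y.length + 1 - (w'.length + 1) = 0 := by omega
    rw [h1, h2]
    simp

lemma Cstat_cons_false {h : ℕ} (ms : Fin h → ℕ) (y : List Bool) :
    Cstat (fun i => runWord (ms i)) (false :: y)
      = Cstat (fun i => runWord (ms i)) y := by
  unfold Cstat
  apply Finset.sum_congr rfl
  intro i _
  simp only [runWord, occCount_cons_false]

lemma strProb_succ {A : Type*} [Fintype A] (P : A → ℝ) (n : ℕ)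
    (E : (Fin (n + 1) → A) → Prop) :
    strProb P (n + 1) E
      = ∑ a : A, P a * strProb P n (fun y => E (Fin.cons a y)) := by
  unfold strProb
  rw [← Equiv.sum_comp (Fin.consEquiv (fun _ => A))
    (fun x => if E x then (∏ i, P (x i)) else 0)]
  rw [Fintype.sum_prod_type]
  apply Finset.sum_congr rfl
  intro a _
  rw [Finset.mul_sum]
  apply Finset.sum_congr rfl
  intro y _
  have hprod : (∏ i, P ((Fin.consEquiv (fun _ => A)) (a, y) i))
      = P a * ∏ i, P (y i) := by
    rw [Fin.prod_univ_succ]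
    simp [Fin.consEquiv]
  have hE : ((Fin.consEquiv (fun _ => A)) (a, y)) = Fin.cons a y := rfl
  rw [hE] at hprod ⊢
  rw [hprod]
  by_cases hE' : E (Fin.cons a y) <;> simp [hE']

/-- Recursion `P(D_n = t) = (P(C_{n+1} = t) − p·P(C_n = t))/q` for the generalized
run statistics with words `wᵢ = 1·0^{mᵢ}`, `m₁ < … < m_h`. -/
theorem stmt6 (p q : ℝ) (hpq : p + q = 1) (hp : 0 ≤ p) (hq : 0 < q)
    (h n : ℕ) (ms : Fin h → ℕ) (hms : StrictMono ms) (t : ℕ) :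
    strProb (fun b => if b then q else p) n
        (fun x => Dstat ms (List.ofFn x) = t) =
      (strProb (fun b => if b then q else p) (n + 1)
          (fun x => Cstat (fun i => runWord (ms i)) (List.ofFn x) = t) -
        p * strProb (fun b => if b then q else p) n
          (fun x => Cstat (fun i => runWord (ms i)) (List.ofFn x) = t)) / q := by
  set P : Bool → ℝ := fun b => if b then q else p with hP
  have hofn : ∀ (a : Bool) (y : Fin n → Bool),
      List.ofFn (Fin.cons a y) = a :: List.ofFn y := by
    intro a y
    rw [List.ofFn_succ]
    simp [Fin.cons]
  have key : strProb P (n + 1)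
      (fun x => Cstat (fun i => runWord (ms i)) (List.ofFn x) = t)
      = q * strProb P n (fun x => Dstat ms (List.ofFn x) = t)
        + p * strProb P n
            (fun x => Cstat (fun i => runWord (ms i)) (List.ofFn x) = t) := by
    rw [strProb_succ]
    rw [Fintype.sum_bool]
    have h1 : (fun y : Fin n → Bool =>
        Cstat (fun i => runWord (ms i)) (List.ofFn (Fin.cons true y)) = t)
        = (fun y : Fin n → Bool => Dstat ms (List.ofFn y) = t) := by
      funext y
      rw [hofn]
      rfl
    have h2 : (fun y : Fin n → Bool =>
        Cstat (fun i => runWord (ms i)) (List.ofFn (Fin.cons false y)) = t)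
        = (fun y : Fin n → Bool =>
            Cstat (fun i => runWord (ms i)) (List.ofFn y) = t) := by
      funext y
      rw [hofn, Cstat_cons_false]
    rw [h1, h2]
    simp [hP]
  rw [key]
  field_simp
  ring
end
end

section
/- Let X₁,…,Xₙ be i.i.d. binary with P(X_i = 0) = p, P(X_i = 1) = q = 1 - p, q > 0, and let m ≥ 1. Let G_{n,m}(x) be the number of maximal runs of 0s in x of length at least m. Then P(G_{n,m}(X₁…Xₙ) = t) = Σ_{t ≤ k ≤ ⌊(n+1)/(m+1)⌋} (-1)^{k-t} C(n+1-mk; t, k-t) q^{k-1} p^{km} − Σ_{t ≤ k ≤ ⌊n/(m+1)⌋} (-1)^{k-t} C(n-mk; t, k-t) q^{k-1} p^{km+1}, where C(N; a, b) = N!/(a! b! (N-a-b)!). -/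
open Finset
open scoped BigOperators Classical

noncomputable section

/-- `triCh N a b` is the multinomial coefficient `C(N; a, b) = N!/(a! b! (N-a-b)!)`. -/
def triCh (N a b : ℕ) : ℕ := N.choose (a + b) * (a + b).choose a

/-- Number of maximal runs of `0`s (`false`s) of length at least `m`. -/
def Gstat (m : ℕ) (x : List Bool) : ℕ :=
  ((Finset.range x.length).filter (fun i =>
      (∀ j < m, x[i + j]? = some false) ∧
      (i = 0 ∨ x[i - 1]? = some true))).card

def gapsP (m : ℕ) (S : Finset ℕ) : Prop := ∀ i ∈ S, ∀ j ∈ S, i < j → i + m < j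

def validIn (m B k : ℕ) : Finset (Finset ℕ) :=
  (powersetCard k (Icc 1 B)).filter (gapsP m)

lemma choose_arith (B k m : ℕ) :
    (B + 1 - k*m).choose (k+1) = (B - k*m).choose (k+1) + ((B-m) - (k-1)*m).choose k := by
  rcases Nat.eq_zero_or_pos k with rfl | hk
  · simp
  · have h1 : (B - m) - (k-1)*m = B - k*m := by
      rw [Nat.sub_sub]
      congr 1
      have hk1 : m + (k-1)*m = k*m := by
        cases k with
        | zero => omega
        | succ k => simp [Nat.succ_sub_one, Nat.succ_mul]; ring
      exact hk1
    rw [h1]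
    rcases le_or_gt (k*m) B with h | h
    · have h2 : B + 1 - k*m = (B - k*m) + 1 := by omega
      rw [h2, Nat.choose_succ_succ']; ring
    · have h3 : B - k*m = 0 := by omega
      have h4 : B + 1 - k*m ≤ 1 := by omega
      rw [h3]
      have h5 : (B + 1 - k*m).choose (k+1) = 0 :=
        Nat.choose_eq_zero_of_lt (by omega)
      rw [h5, Nat.choose_eq_zero_of_lt (by omega), Nat.choose_eq_zero_of_lt (by omega)]


theorem card_validIn (m B k : ℕ) : (validIn m B k).card = (B - (k-1)*m).choose k := by
  induction B using Nat.strong_induction_on generalizing k with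
  | _ B ih =>
  match k with
  | 0 => simp [validIn, gapsP, Finset.powersetCard_zero, Finset.filter_singleton]
  | (k+1) =>
    match B with
    | 0 =>
      rw [validIn, show (Icc 1 0 : Finset ℕ) = ∅ from Finset.Icc_eq_empty (by omega),
        Finset.powersetCard_eq_empty.2 (by simp)]
      simp [Nat.choose_eq_zero_of_lt]
    | (B+1) =>
      have hBi : Icc 1 (B+1) = insert (B+1) (Icc 1 B) := by
        ext x; simp [Finset.mem_Icc, Finset.mem_insert]; omega
      have hni : (B+1) ∉ Icc 1 B := by simp
      rw [validIn, hBi, Finset.powersetCard_succ_insert hni, Finset.filter_union,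
        Finset.card_union_of_disjoint]
      · -- second part
        rw [Finset.filter_image]
        have hinj : Set.InjOn (insert (B+1)) (((powersetCard k (Icc 1 B)).filter
            (fun S => gapsP m (insert (B+1) S)) : Finset (Finset ℕ)) : Set (Finset ℕ)) := by
          intro S hS T hT hST
          simp only [Finset.coe_filter, Set.mem_setOf_eq, Finset.mem_powersetCard] at hS hT
          have hSB : (B+1) ∉ S := fun h => hni (hS.1.1 h)
          have hTB : (B+1) ∉ T := fun h => hni (hT.1.1 h)
          have := congrArg (Finset.erase · (B+1)) hST
          simpa [Finset.erase_insert, hSB, hTB] using this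
        rw [Finset.card_image_of_injOn hinj]
        have hset : (powersetCard k (Icc 1 B)).filter (fun S => gapsP m (insert (B+1) S))
            = validIn m (B - m) k := by
          ext S
          simp only [Finset.mem_filter, Finset.mem_powersetCard, validIn]
          constructor
          · rintro ⟨⟨hsub, hcard⟩, hg⟩
            refine ⟨⟨fun i hi => ?_, hcard⟩, fun i hi j hj hij => ?_⟩
            · have h1 := hsub hi
              simp only [Finset.mem_Icc] at h1 ⊢
              have : i + m < B + 1 := hg i (Finset.mem_insert_of_mem hi) (B+1)
                (Finset.mem_insert_self _ _) (by omega)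
              exact ⟨h1.1, by omega⟩
            · exact hg i (Finset.mem_insert_of_mem hi) j (Finset.mem_insert_of_mem hj) hij
          · rintro ⟨⟨hsub, hcard⟩, hg⟩
            have hbd : ∀ i ∈ S, 1 ≤ i ∧ i ≤ B - m := by
              intro i hi; have := hsub hi; simpa [Finset.mem_Icc] using this
            refine ⟨⟨fun i hi => ?_, hcard⟩, ?_⟩
            · have := hbd i hi; simp only [Finset.mem_Icc]; omega
            · intro i hi j hj hij
              rcases Finset.mem_insert.1 hi with rfl | hi'
              · rcases Finset.mem_insert.1 hj with rfl | hj'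
                · omega
                · have := hbd j hj'; omega
              · rcases Finset.mem_insert.1 hj with rfl | hj'
                · have := hbd i hi'
                  have hmB : m < B := by
                    rcases this with ⟨h1, h2⟩; omega
                  omega
                · exact hg i hi' j hj' hij
        rw [hset, ih (B - m) (by omega) k,
          show filter (gapsP m) (powersetCard (k+1) (Icc 1 B)) = validIn m B (k+1) from rfl,
          ih B (by omega) (k+1)]
        simpa using (choose_arith B k m).symm
      · -- disjoint
        apply Finset.disjoint_filter_filter
        rw [Finset.disjoint_left]
        intro S hS hS2
        simp only [Finset.mem_powersetCard] at hS
        simp only [Finset.mem_image] at hS2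
        obtain ⟨T, hT, rfl⟩ := hS2
        exact hni (hS.1 (Finset.mem_insert_self _ _))



lemma sum_pi_prod {A : Type*} [Fintype A] (n : ℕ) (g : Fin n → A → ℝ) :
    ∑ x : Fin n → A, ∏ i, g i (x i) = ∏ i, ∑ a, g i a := by
  rw [Finset.prod_univ_sum]
  rw [Fintype.piFinset_univ]

lemma strProb_total {A : Type*} [Fintype A] (P : A → ℝ) (hP : ∑ a, P a = 1) (n : ℕ) :
    strProb P n (fun _ => True) = 1 := by
  simp only [strProb, if_pos trivial]
  rw [sum_pi_prod n (fun _ a => P a)]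
  simp [hP]

lemma strProb_agree {A : Type*} [Fintype A] (P : A → ℝ) (hP : ∑ a, P a = 1) (n : ℕ)
    (dom : Finset ℕ) (hdom : dom ⊆ range n) (f : ℕ → A) :
    strProb P n (fun x => ∀ l ∈ dom, ∀ h : l < n, x ⟨l, h⟩ = f l) =
      ∏ l ∈ dom, P (f l) := by
  have key : ∀ x : Fin n → A,
      (@ite ℝ (∀ l ∈ dom, ∀ h : l < n, x ⟨l, h⟩ = f l) (Classical.propDecidable _) (∏ i, P (x i)) 0)
      = ∏ i : Fin n, (if (i : ℕ) ∈ dom then (if x i = f i then P (x i) else 0) else P (x i)) := by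
    intro x
    by_cases hE : ∀ l ∈ dom, ∀ h : l < n, x ⟨l, h⟩ = f l
    · rw [if_pos hE]
      apply Finset.prod_congr rfl
      intro i _
      by_cases hi : (i : ℕ) ∈ dom
      · rw [if_pos hi, if_pos (hE i hi i.isLt)]
      · rw [if_neg hi]
    · rw [if_neg hE]
      push_neg at hE
      obtain ⟨l, hl, h, hne⟩ := hE
      refine (Finset.prod_eq_zero (Finset.mem_univ (⟨l, h⟩ : Fin n)) ?_).symm
      simp only [hl, if_pos, hne, if_neg]
      simp [hl, hne]
  simp only [strProb]
  refine Eq.trans (Finset.sum_congr rfl fun x _ => key x) ?_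
  rw [sum_pi_prod n (fun i a => if (i : ℕ) ∈ dom then (if a = f i then P a else 0) else P a)]
  have fac : ∀ i : Fin n, (∑ a, if (i : ℕ) ∈ dom then (if a = f i then P a else 0) else P a)
      = (if (i : ℕ) ∈ dom then P (f i) else 1) := by
    intro i
    by_cases hi : (i : ℕ) ∈ dom
    · simp [hi, Finset.sum_ite_eq' Finset.univ (f (i : ℕ)) P]
    · simp [hi, hP]
  rw [Finset.prod_congr rfl (fun i _ => fac i)]
  rw [Fin.prod_univ_eq_prod_range (fun l => if l ∈ dom then P (f l) else 1) n]
  rw [← Finset.prod_filter]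
  congr 1
  ext l
  simp only [Finset.mem_filter, Finset.mem_range]
  exact ⟨fun h => h.2, fun h => ⟨Finset.mem_range.1 (hdom h), h⟩⟩


def startSet (m : ℕ) (L : List Bool) : Finset ℕ :=
  (Finset.range L.length).filter (fun i =>
      (∀ j < m, L[i + j]? = some false) ∧
      (i = 0 ∨ L[i - 1]? = some true))

lemma mem_startSet_bound {m : ℕ} (hm : 1 ≤ m) {L : List Bool} {i : ℕ}
    (hi : i ∈ startSet m L) : i + m ≤ L.length := by
  simp only [startSet, Finset.mem_filter, Finset.mem_range] at hi
  obtain ⟨_, h0, _⟩ := hi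
  have := h0 (m - 1) (by omega)
  by_contra hc
  rw [List.getElem?_eq_none_iff.2 (by omega)] at this
  cases this

lemma startSet_gaps {m : ℕ} {L : List Bool} {i j : ℕ}
    (hi : i ∈ startSet m L) (hj : j ∈ startSet m L) (hij : i < j) : i + m < j := by
  simp only [startSet, Finset.mem_filter, Finset.mem_range] at hi hj
  by_contra hc
  have h1 : j - 1 - i < m := by omega
  have h2 := hi.2.1 (j - 1 - i) h1
  have h3 : j = 0 ∨ L[j - 1]? = some true := hj.2.2
  rcases h3 with h3 | h3
  · omega
  · rw [show i + (j - 1 - i) = j - 1 by omega] at h2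
    rw [h2] at h3
    exact Bool.noConfusion (Option.some.inj h3)

def zeroDom (m : ℕ) (S : Finset ℕ) : Finset ℕ := S.biUnion (fun i => Ico i (i+m))
def predDom (S : Finset ℕ) : Finset ℕ := (S.erase 0).image (fun i => i - 1)
def domS (m : ℕ) (S : Finset ℕ) : Finset ℕ := zeroDom m S ∪ predDom S
def fS (m : ℕ) (S : Finset ℕ) (l : ℕ) : Bool := decide (∀ i ∈ S, ¬(i ≤ l ∧ l < i + m))

def ValidS (n m : ℕ) (S : Finset ℕ) : Prop := (∀ i ∈ S, i + m ≤ n) ∧ gapsP m S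

lemma fS_zero {m : ℕ} {S : Finset ℕ} {l : ℕ} (hl : l ∈ zeroDom m S) :
    fS m S l = false := by
  simp only [zeroDom, Finset.mem_biUnion, Finset.mem_Ico] at hl
  obtain ⟨i, hi, h1, h2⟩ := hl
  simp only [fS, decide_eq_false_iff_not]
  push_neg
  exact ⟨i, hi, h1, h2⟩

lemma fS_pred {m : ℕ} {S : Finset ℕ} {l : ℕ} (hg : gapsP m S) (hl : l ∈ predDom S) :
    fS m S l = true := by
  simp only [predDom, Finset.mem_image, Finset.mem_erase] at hl
  obtain ⟨i, ⟨hi0, hi⟩, rfl⟩ := hl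
  simp only [fS, decide_eq_true_eq]
  intro i' hi' ⟨ha, hb⟩
  rcases lt_trichotomy i' i with h | rfl | h
  · have := hg i' hi' i hi h; omega
  · omega
  · have := hg i hi i' hi' h; omega

lemma domS_subset {n m : ℕ} (hm : 1 ≤ m) {S : Finset ℕ} (hv : ∀ i ∈ S, i + m ≤ n) :
    domS m S ⊆ range n := by
  intro l hl
  rcases Finset.mem_union.1 hl with hl | hl
  · simp only [zeroDom, Finset.mem_biUnion, Finset.mem_Ico] at hl
    obtain ⟨i, hi, _, h2⟩ := hl
    have := hv i hi
    exact Finset.mem_range.2 (by omega)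
  · simp only [predDom, Finset.mem_image, Finset.mem_erase] at hl
    obtain ⟨i, ⟨_, hi⟩, rfl⟩ := hl
    have := hv i hi
    exact Finset.mem_range.2 (by omega)

lemma card_zeroDom {m : ℕ} {S : Finset ℕ} (hg : gapsP m S) :
    (zeroDom m S).card = S.card * m := by
  rw [zeroDom, Finset.card_biUnion]
  · simp [Nat.Ico_eq_range', Finset.sum_const, mul_comm]
  · intro i hi j hj hij
    have : i + m < j ∨ j + m < i := by
      rcases lt_or_gt_of_ne hij with h | h
      · exact Or.inl (hg i hi j hj h)
      · exact Or.inr (hg j hj i hi h)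
    apply Finset.disjoint_left.2
    intro a ha hb
    simp only [Finset.mem_Ico] at ha hb
    omega

lemma card_predDom {S : Finset ℕ} :
    (predDom S).card = S.card - (if 0 ∈ S then 1 else 0) := by
  rw [predDom, Finset.card_image_of_injOn]
  · by_cases h0 : 0 ∈ S
    · rw [Finset.card_erase_of_mem h0, if_pos h0]
    · rw [Finset.erase_eq_of_notMem h0, if_neg h0]; omega
  · intro a ha b hb hab
    simp only [Finset.coe_erase, Set.mem_diff, Finset.mem_coe, Set.mem_singleton_iff] at ha hb
    simp only at hab
    omega

lemma disjoint_doms {m : ℕ} {S : Finset ℕ} (hg : gapsP m S) :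
    Disjoint (zeroDom m S) (predDom S) := by
  apply Finset.disjoint_left.2
  intro l hl hl'
  have h1 := fS_zero hl
  have h2 := fS_pred hg hl'
  rw [h1] at h2
  exact Bool.noConfusion h2

lemma event_iff {n m : ℕ} (hm : 1 ≤ m) {S : Finset ℕ} (hv : ValidS n m S)
    (x : Fin n → Bool) :
    (S ⊆ startSet m (List.ofFn x)) ↔
      (∀ l ∈ domS m S, ∀ h : l < n, x ⟨l, h⟩ = fS m S l) := by
  obtain ⟨hb, hg⟩ := hv
  have hget : ∀ l (h : l < n), (List.ofFn x)[l]? = some (x ⟨l, h⟩) := by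
    intro l h
    rw [List.getElem?_ofFn]
    exact dif_pos h
  constructor
  · intro hsub l hl hln
    rcases Finset.mem_union.1 hl with hl | hl
    · rw [fS_zero hl]
      simp only [zeroDom, Finset.mem_biUnion, Finset.mem_Ico] at hl
      obtain ⟨i, hi, h1, h2⟩ := hl
      have hst := hsub hi
      simp only [startSet, Finset.mem_filter] at hst
      have := hst.2.1 (l - i) (by omega)
      rw [show i + (l - i) = l by omega, hget l hln] at this
      exact Option.some.inj this
    · rw [fS_pred hg hl]
      simp only [predDom, Finset.mem_image, Finset.mem_erase] at hl
      obtain ⟨i, ⟨hi0, hi⟩, rfl⟩ := hl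
      have hst := hsub hi
      simp only [startSet, Finset.mem_filter] at hst
      rcases hst.2.2 with h | h
      · omega
      · rw [hget (i-1) hln] at h
        exact Option.some.inj h
  · intro hagree i hi
    have hbd := hb i hi
    simp only [startSet, Finset.mem_filter, Finset.mem_range, List.length_ofFn]
    refine ⟨by omega, fun j hj => ?_, ?_⟩
    · have hmem : i + j ∈ domS m S := Finset.mem_union_left _
        (Finset.mem_biUnion.2 ⟨i, hi, Finset.mem_Ico.2 ⟨by omega, by omega⟩⟩)
      have := hagree (i+j) hmem (by omega)
      rw [hget (i+j) (by omega), this, fS_zero (Finset.mem_biUnion.2 ⟨i, hi, Finset.mem_Ico.2 ⟨by omega, by omega⟩⟩)]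
    · rcases Nat.eq_zero_or_pos i with rfl | hipos
      · exact Or.inl rfl
      · refine Or.inr ?_
        have hmem' : i - 1 ∈ predDom S :=
          Finset.mem_image.2 ⟨i, Finset.mem_erase.2 ⟨by omega, hi⟩, rfl⟩
        have hmem : i - 1 ∈ domS m S := Finset.mem_union_right _ hmem'
        have := hagree (i-1) hmem (by omega)
        rw [hget (i-1) (by omega), this, fS_pred hg hmem']

lemma stepA (t K g : ℕ) (hg : g ≤ K) :
    ∑ k ∈ Icc t K, (-1:ℝ)^(k-t) * (k.choose t) * (g.choose k)
      = if g = t then 1 else 0 := by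
  rcases lt_or_ge g t with h | h
  · rw [if_neg (by omega)]
    apply Finset.sum_eq_zero
    intro k hk
    simp only [Finset.mem_Icc] at hk
    rw [Nat.choose_eq_zero_of_lt (show g < k by omega)]
    simp
  · have hsub : Icc t g ⊆ Icc t K := Finset.Icc_subset_Icc_right hg
    rw [← Finset.sum_subset hsub (by
      intro k hk hk2
      simp only [Finset.mem_Icc] at hk hk2
      rw [Nat.choose_eq_zero_of_lt (show g < k by omega)]
      simp)]
    have hterm : ∀ k ∈ Icc t g, (-1:ℝ)^(k-t) * (k.choose t) * (g.choose k)
        = (g.choose t) * ((-1:ℝ)^(k-t) * ((g-t).choose (k-t))) := by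
      intro k hk
      simp only [Finset.mem_Icc] at hk
      have := Nat.choose_mul (n := g) (hk.1)
      have hc : (g.choose k * k.choose t : ℝ) = (g.choose t : ℝ) * ((g-t).choose (k-t)) := by
        exact_mod_cast congrArg (Nat.cast : ℕ → ℝ) this
      rw [mul_assoc, mul_comm ((k.choose t : ℝ)) _, hc]
      ring
    rw [Finset.sum_congr rfl hterm, ← Finset.mul_sum]
    have hre : ∑ k ∈ Icc t g, (-1:ℝ)^(k-t) * ((g-t).choose (k-t))
        = ∑ j ∈ range (g - t + 1), (-1:ℝ)^j * ((g-t).choose j) := by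
      refine Finset.sum_nbij' (fun k => k - t) (fun j => j + t) ?_ ?_ ?_ ?_ ?_
      · intro a ha; simp only [Finset.mem_Icc] at ha; simp only [Finset.mem_range]; omega
      · intro a ha; simp only [Finset.mem_range] at ha; simp only [Finset.mem_Icc]; omega
      · intro a ha; simp only [Finset.mem_Icc] at ha; show a - t + t = a; omega
      · intro a ha; simp only [Finset.mem_range] at ha; show a + t - t = a; omega
      · intro a ha; rfl
    rw [hre]
    have := @Int.alternating_sum_range_choose (g - t)
    have hcast : ∑ j ∈ range (g - t + 1), (-1:ℝ)^j * ((g-t).choose j)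
        = ((if g - t = 0 then 1 else 0 : ℤ) : ℝ) := by
      rw [← this]
      push_cast
      rfl
    rw [hcast]
    by_cases hgt : g = t
    · subst hgt; simp
    · rw [if_neg (by omega), if_neg hgt]
      simp

theorem myif_congr {α : Sort*} {P Q : Prop} {i1 : Decidable P} {i2 : Decidable Q}
    (h : P ↔ Q) {a b : α} : (@ite _ P i1 a b) = (@ite _ Q i2 a b) :=
  if_congr h rfl rfl

lemma sum_event (p q : ℝ) (hpq : p + q = 1) (n m : ℕ) (hm : 1 ≤ m)
    (S : Finset ℕ) :
    ∑ x : Fin n → Bool,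
        (if S ⊆ startSet m (List.ofFn x) then (∏ i, (if x i then q else p)) else 0)
      = if ValidS n m S then
          q ^ (S.card - (if 0 ∈ S then 1 else 0)) * p ^ (S.card * m) else 0 := by
  have hP : ∑ b : Bool, (if b then q else p) = 1 := by
    rw [Fintype.sum_bool]; simpa using by linarith
  by_cases hv : ValidS n m S
  · rw [if_pos hv]
    have h1 : ∀ x : Fin n → Bool,
        (if S ⊆ startSet m (List.ofFn x) then (∏ i, (if x i then q else p)) else 0)
        = (if (∀ l ∈ domS m S, ∀ h : l < n, x ⟨l, h⟩ = fS m S l)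
            then (∏ i, (if x i then q else p)) else 0) := by
      intro x
      exact myif_congr (event_iff hm hv x)
    rw [Finset.sum_congr rfl (fun x _ => h1 x)]
    have := strProb_agree (fun b => if b then q else p) hP n (domS m S)
      (domS_subset hm hv.1) (fS m S)
    simp only [strProb] at this
    refine Eq.trans (Eq.trans (by rfl) this) ?_
    rw [domS, Finset.prod_union (disjoint_doms hv.2)]
    have hz : ∀ l ∈ zeroDom m S, (if fS m S l then q else p) = p := by
      intro l hl; rw [fS_zero hl]; simp
    have hp2 : ∀ l ∈ predDom S, (if fS m S l then q else p) = q := by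
      intro l hl; rw [fS_pred hv.2 hl]; simp
    rw [Finset.prod_congr rfl hz, Finset.prod_congr rfl hp2,
      Finset.prod_const, Finset.prod_const, card_zeroDom hv.2, card_predDom]
    ring
  · rw [if_neg hv]
    apply Finset.sum_eq_zero
    intro x _
    rw [if_neg]
    intro hsub
    apply hv
    constructor
    · intro i hi
      have := mem_startSet_bound hm (hsub hi)
      rwa [List.length_ofFn] at this
    · intro i hi j hj hij
      exact startSet_gaps (hsub hi) (hsub hj) hij

lemma filter_valid_not0 (n m k : ℕ) (hm : 1 ≤ m) :
    (powersetCard k (range n)).filter (fun S => ValidS n m S ∧ 0 ∉ S)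
      = validIn m (n - m) k := by
  ext S
  simp only [Finset.mem_filter, Finset.mem_powersetCard, validIn]
  simp only [ValidS]
  constructor
  · rintro ⟨⟨hsub, hcard⟩, ⟨hb, hg⟩, h0⟩
    refine ⟨⟨fun i hi => ?_, hcard⟩, hg⟩
    have h1 : i < n := Finset.mem_range.1 (hsub hi)
    have h2 := hb i hi
    have h3 : i ≠ 0 := fun h => h0 (h ▸ hi)
    simp only [Finset.mem_Icc]
    omega
  · rintro ⟨⟨hsub, hcard⟩, hg⟩
    have hb : ∀ i ∈ S, 1 ≤ i ∧ i ≤ n - m := by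
      intro i hi; simpa [Finset.mem_Icc] using hsub hi
    refine ⟨⟨fun i hi => ?_, hcard⟩, ⟨fun i hi => ?_, hg⟩, fun h0 => ?_⟩
    · have := hb i hi; exact Finset.mem_range.2 (by omega)
    · have := hb i hi; omega
    · have := hb 0 h0; omega

lemma filter_valid_with0 (n m k : ℕ) (hm : 1 ≤ m) (hmn : m ≤ n) (hk : 1 ≤ k) :
    ((powersetCard k (range n)).filter (fun S => ValidS n m S ∧ 0 ∈ S)).card
      = ((n - 2*m) - (k-1-1)*m).choose (k-1) := by
  rw [← card_validIn m (n - 2*m) (k-1)]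
  apply Finset.card_nbij' (fun S => (S.erase 0).image (fun i => i - m))
    (fun T => insert 0 (T.image (fun t => t + m)))
  · intro S hS
    simp only [Finset.mem_coe, Finset.mem_filter, Finset.mem_powersetCard] at hS
    simp only [ValidS] at hS
    obtain ⟨⟨hsub, hcard⟩, ⟨hb, hg⟩, h0⟩ := hS
    have hmem : ∀ i ∈ S.erase 0, m + 1 ≤ i ∧ i + m ≤ n := by
      intro i hi
      rw [Finset.mem_erase] at hi
      have := hg 0 h0 i hi.2 (by omega)
      exact ⟨by omega, hb i hi.2⟩
    simp only [validIn, Finset.mem_coe, Finset.mem_filter, Finset.mem_powersetCard]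
    refine ⟨⟨?_, ?_⟩, ?_⟩
    · intro a ha
      simp only [Finset.mem_image] at ha
      obtain ⟨i, hi, rfl⟩ := ha
      have := hmem i hi
      simp only [Finset.mem_Icc]
      omega
    · rw [Finset.card_image_of_injOn (by
        intro a ha b hb' hab
        have := hmem a ha; have := hmem b hb'
        simp only at hab
        omega), Finset.card_erase_of_mem h0, hcard]
    · intro a ha b hb' hab
      simp only [Finset.mem_image] at ha hb'
      obtain ⟨i, hi, rfl⟩ := ha
      obtain ⟨j, hj, rfl⟩ := hb'
      have h1 := hmem i hi; have h2 := hmem j hj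
      have hij : i < j := by omega
      have := hg i (Finset.mem_of_mem_erase hi) j (Finset.mem_of_mem_erase hj) hij
      omega
  · intro T hT
    simp only [validIn, Finset.coe_filter, Set.mem_setOf_eq, Finset.mem_powersetCard] at hT
    obtain ⟨⟨hsub, hcard⟩, hg⟩ := hT
    have hmem : ∀ t ∈ T, 1 ≤ t ∧ t + 2*m ≤ n := by
      intro t ht
      have := hsub ht
      simp only [Finset.mem_Icc] at this
      omega
    have h0T : (0:ℕ) ∉ T.image (fun t => t + m) := by
      simp only [Finset.mem_image]
      rintro ⟨t, ht, h⟩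
      have := hmem t ht; omega
    simp only [Finset.mem_coe, Finset.mem_filter, Finset.mem_powersetCard]
    simp only [ValidS]
    refine ⟨⟨?_, ?_⟩, ⟨?_, ?_⟩, Finset.mem_insert_self _ _⟩
    · intro a ha
      rcases Finset.mem_insert.1 ha with rfl | ha
      · exact Finset.mem_range.2 (by omega)
      · simp only [Finset.mem_image] at ha
        obtain ⟨t, ht, rfl⟩ := ha
        have := hmem t ht
        exact Finset.mem_range.2 (by omega)
    · rw [Finset.card_insert_of_notMem h0T, Finset.card_image_of_injOn
        (by intro a _ b _ hab; simp only at hab; omega), hcard]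
      omega
    · intro i hi
      rcases Finset.mem_insert.1 hi with rfl | hi
      · omega
      · simp only [Finset.mem_image] at hi
        obtain ⟨t, ht, rfl⟩ := hi
        have := hmem t ht; omega
    · intro i hi j hj hij
      rcases Finset.mem_insert.1 hi with rfl | hi
      · rcases Finset.mem_insert.1 hj with rfl | hj
        · omega
        · simp only [Finset.mem_image] at hj
          obtain ⟨u, hu, rfl⟩ := hj
          have := hmem u hu; omega
      · rcases Finset.mem_insert.1 hj with rfl | hj
        · simp only [Finset.mem_image] at hi
          obtain ⟨u, hu, rfl⟩ := hi
          have := hmem u hu; omega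
        · simp only [Finset.mem_image] at hi hj
          obtain ⟨u, hu, rfl⟩ := hi
          obtain ⟨v, hv, rfl⟩ := hj
          have := hg u hu v hv (by omega)
          omega
  · intro S hS
    simp only [Finset.mem_coe, Finset.mem_filter, Finset.mem_powersetCard] at hS
    simp only [ValidS] at hS
    obtain ⟨⟨hsub, hcard⟩, ⟨hb, hg⟩, h0⟩ := hS
    have hmem : ∀ i ∈ S.erase 0, m + 1 ≤ i := by
      intro i hi
      rw [Finset.mem_erase] at hi
      have := hg 0 h0 i hi.2 (by omega)
      omega
    beta_reduce
    rw [Finset.image_image]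
    have : (S.erase 0).image ((fun t => t + m) ∘ (fun i => i - m)) = S.erase 0 := by
      apply Finset.image_congr (g := id) ?_ |>.trans (Finset.image_id)
      intro i hi
      have := hmem i hi
      simp only [Function.comp_apply, id_eq]
      omega
    rw [this, Finset.insert_erase h0]
  · intro T hT
    simp only [validIn, Finset.coe_filter, Set.mem_setOf_eq, Finset.mem_powersetCard] at hT
    obtain ⟨⟨hsub, hcard⟩, hg⟩ := hT
    have h0T : (0:ℕ) ∉ T.image (fun t => t + m) := by
      simp only [Finset.mem_image]
      rintro ⟨t, ht, h⟩
      have := hsub ht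
      simp only [Finset.mem_Icc] at this
      omega
    beta_reduce
    rw [Finset.erase_insert h0T, Finset.image_image]
    apply Finset.image_congr (g := id) ?_ |>.trans (Finset.image_id)
    intro t _
    simp only [Function.comp_apply, id_eq]
    omega

lemma sumS (p q : ℝ) (n m k : ℕ) (hm : 1 ≤ m) (hk : 1 ≤ k) (hkn : k + k*m ≤ n+1) :
    ∑ S ∈ powersetCard k (range n),
        (if ValidS n m S then q ^ (S.card - (if 0 ∈ S then 1 else 0)) * p ^ (S.card * m) else 0)
      = ((n - k*m).choose k : ℝ) * q^k * p^(k*m)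
        + ((n - k*m).choose (k-1) : ℝ) * q^(k-1) * p^(k*m) := by
  have hmk : m + (k-1)*m = k*m := by
    obtain ⟨k', rfl⟩ : ∃ k', k = k' + 1 := ⟨k-1, by omega⟩
    simp [Nat.succ_sub_one, Nat.succ_mul, Nat.add_comm]
  have hmn : m ≤ n := by
    have h1 : m ≤ k*m := by omega
    omega
  rw [← Finset.sum_filter_add_sum_filter_not (powersetCard k (range n)) (fun S => 0 ∈ S)]
  have hcard : ∀ S ∈ powersetCard k (range n), S.card = k :=
    fun S hS => (Finset.mem_powersetCard.1 hS).2
  have h1 : ∑ S ∈ (powersetCard k (range n)).filter (fun S => 0 ∈ S),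
      (if ValidS n m S then q ^ (S.card - (if 0 ∈ S then 1 else 0)) * p ^ (S.card * m) else 0)
      = ∑ S ∈ (powersetCard k (range n)).filter (fun S => 0 ∈ S),
        (if ValidS n m S then q^(k-1) * p^(k*m) else 0) := by
    apply Finset.sum_congr rfl
    intro S hS
    rw [Finset.mem_filter] at hS
    rw [hcard S hS.1, if_pos hS.2]
  have h2 : ∑ S ∈ (powersetCard k (range n)).filter (fun S => ¬ 0 ∈ S),
      (if ValidS n m S then q ^ (S.card - (if 0 ∈ S then 1 else 0)) * p ^ (S.card * m) else 0)
      = ∑ S ∈ (powersetCard k (range n)).filter (fun S => ¬ 0 ∈ S),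
        (if ValidS n m S then q^k * p^(k*m) else 0) := by
    apply Finset.sum_congr rfl
    intro S hS
    rw [Finset.mem_filter] at hS
    simp [hcard S hS.1, hS.2]
  rw [h1, h2]
  rw [← Finset.sum_filter, ← Finset.sum_filter, Finset.sum_const, Finset.sum_const,
    Finset.filter_filter, Finset.filter_filter]
  have hc1 : ((powersetCard k (range n)).filter (fun S => 0 ∈ S ∧ ValidS n m S)).card
      = (n - k*m).choose (k-1) := by
    have heq : ((powersetCard k (range n)).filter (fun S => 0 ∈ S ∧ ValidS n m S))
        = ((powersetCard k (range n)).filter (fun S => ValidS n m S ∧ 0 ∈ S)) := by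
      apply Finset.filter_congr
      intro S _
      exact ⟨fun ⟨a, b⟩ => ⟨b, a⟩, fun ⟨a, b⟩ => ⟨b, a⟩⟩
    rw [heq, filter_valid_with0 n m k hm hmn hk]
    rcases eq_or_lt_of_le hk with rfl | hk2
    · simp
    · have h3 : 2*m + (k-2)*m = k*m := by
        have h4 : (2 + (k-2)) * m = k * m := by
          rw [show 2 + (k-2) = k by omega]
        rw [← h4]; ring
      rw [show k-1-1 = k-2 by omega, Nat.sub_sub, h3]
  have hc2 : ((powersetCard k (range n)).filter (fun S => ¬ 0 ∈ S ∧ ValidS n m S)).card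
      = (n - k*m).choose k := by
    have heq : ((powersetCard k (range n)).filter (fun S => ¬ 0 ∈ S ∧ ValidS n m S))
        = ((powersetCard k (range n)).filter (fun S => ValidS n m S ∧ 0 ∉ S)) := by
      apply Finset.filter_congr
      intro S _
      exact ⟨fun ⟨a, b⟩ => ⟨b, a⟩, fun ⟨a, b⟩ => ⟨b, a⟩⟩
    rw [heq, filter_valid_not0 n m k hm, card_validIn, Nat.sub_sub, hmk]
  rw [hc1, hc2]
  simp only [nsmul_eq_mul]
  ring

lemma Gstat_eq_card (m : ℕ) (L : List Bool) : Gstat m L = (startSet m L).card := rfl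

lemma startSet_card_le (n m : ℕ) (hm : 1 ≤ m) (x : Fin n → Bool) :
    (startSet m (List.ofFn x)).card ≤ (n+1)/(m+1) := by
  generalize hkdef : (startSet m (List.ofFn x)).card = k
  rcases Nat.eq_zero_or_pos k with h0 | hpos
  · exact h0 ▸ Nat.zero_le _
  · obtain ⟨i0, hi0⟩ := Finset.card_pos.1 (hkdef ▸ hpos)
    have hb0 := mem_startSet_bound hm hi0
    rw [List.length_ofFn] at hb0
    have hmn : m ≤ n := by omega
    have hmem : (startSet m (List.ofFn x)).image (fun i => i + 1) ∈ validIn m (n+1-m) k := by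
      simp only [validIn, Finset.mem_filter, Finset.mem_powersetCard]
      refine ⟨⟨?_, ?_⟩, ?_⟩
      · intro a ha
        simp only [Finset.mem_image] at ha
        obtain ⟨i, hi, rfl⟩ := ha
        have := mem_startSet_bound hm hi
        rw [List.length_ofFn] at this
        simp only [Finset.mem_Icc]
        omega
      · rw [Finset.card_image_of_injOn (by intro a _ b _ hab; simpa using hab)]
        exact hkdef
      · intro a ha b hb hab
        simp only [Finset.mem_image] at ha hb
        obtain ⟨i, hi, rfl⟩ := ha
        obtain ⟨j, hj, rfl⟩ := hb
        have := startSet_gaps hi hj (by omega)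
        omega
    have hne : 0 < (validIn m (n+1-m) k).card := Finset.card_pos.2 ⟨_, hmem⟩
    rw [card_validIn] at hne
    have hle : k ≤ (n+1-m) - (k-1)*m := by
      by_contra hc
      rw [Nat.choose_eq_zero_of_lt (by omega)] at hne
      omega
    rw [Nat.le_div_iff_mul_le (by omega)]
    have hmk : m + (k-1)*m = k*m := by
      obtain ⟨k', rfl⟩ : ∃ k', k = k' + 1 := ⟨k-1, by omega⟩
      simp [Nat.succ_sub_one, Nat.succ_mul, Nat.add_comm]
    have hexp : k * (m+1) = k + k*m := by ring
    omega

lemma Gstat_le (n m : ℕ) (hm : 1 ≤ m) (x : Fin n → Bool) :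
    Gstat m (List.ofFn x) ≤ (n+1)/(m+1) := by
  rw [Gstat_eq_card]
  exact startSet_card_le n m hm x

lemma Wk_eq (p q : ℝ) (n m k : ℕ) :
    ∑ x : Fin n → Bool,
        (∏ i, (if x i then q else p)) * ((Gstat m (List.ofFn x)).choose k : ℝ)
      = ∑ S ∈ powersetCard k (range n), ∑ x : Fin n → Bool,
          (if S ⊆ startSet m (List.ofFn x) then (∏ i, (if x i then q else p)) else 0) := by
  rw [Finset.sum_comm]
  apply Finset.sum_congr rfl
  intro x _
  have hsub : startSet m (List.ofFn x) ⊆ range n := by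
    intro i hi
    have : i ∈ range (List.ofFn x).length := Finset.mem_filter.1 hi |>.1
    rwa [List.length_ofFn] at this
  symm
  have hps : (powersetCard k (range n)).filter (fun S => S ⊆ startSet m (List.ofFn x))
      = powersetCard k (startSet m (List.ofFn x)) := by
    ext S
    simp only [Finset.mem_filter, Finset.mem_powersetCard]
    exact ⟨fun ⟨⟨_, hc⟩, hs⟩ => ⟨hs, hc⟩, fun ⟨hs, hc⟩ => ⟨⟨hs.trans hsub, hc⟩, hs⟩⟩
  calc ∑ S ∈ powersetCard k (range n),
        (if S ⊆ startSet m (List.ofFn x) then (∏ i, (if x i then q else p)) else 0)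
      = ∑ S ∈ powersetCard k (range n),
        (∏ i, (if x i then q else p)) * (if S ⊆ startSet m (List.ofFn x) then (1:ℝ) else 0) := by
        apply Finset.sum_congr rfl; intro S _
        by_cases h : S ⊆ startSet m (List.ofFn x) <;> simp [h]
    _ = (∏ i, (if x i then q else p)) *
        ∑ S ∈ powersetCard k (range n), (if S ⊆ startSet m (List.ofFn x) then (1:ℝ) else 0) := by
        rw [Finset.mul_sum]
    _ = (∏ i, (if x i then q else p)) * ((Gstat m (List.ofFn x)).choose k : ℝ) := by
        congr 1
        rw [← Finset.sum_filter, Finset.sum_const, hps, Finset.card_powersetCard,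
          nsmul_eq_mul, mul_one, Gstat_eq_card]

/-- Explicit formula for the distribution of the number `G_{n,m}` of maximal
`0`-runs of length at least `m`. -/
theorem stmt8 (p q : ℝ) (hpq : p + q = 1) (hp : 0 ≤ p) (hq : 0 < q)
    (n m t : ℕ) (hm : 1 ≤ m) :
    strProb (fun b => if b then q else p) n (fun x => Gstat m (List.ofFn x) = t) =
      (∑ k ∈ Finset.Icc t ((n + 1) / (m + 1)),
          (-1 : ℝ) ^ (k - t) * (triCh (n + 1 - m * k) t (k - t) : ℕ) *
            q ^ ((k : ℤ) - 1) * p ^ (k * m)) -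
      (∑ k ∈ Finset.Icc t (n / (m + 1)),
          (-1 : ℝ) ^ (k - t) * (triCh (n - m * k) t (k - t) : ℕ) *
            q ^ ((k : ℤ) - 1) * p ^ (k * m + 1)) := by
  have hq' : q ≠ 0 := ne_of_gt hq
  set K := (n + 1) / (m + 1) with hK
  -- Step 1
  have hLHS : strProb (fun b => if b then q else p) n (fun x => Gstat m (List.ofFn x) = t)
      = ∑ k ∈ Finset.Icc t K, (-1:ℝ)^(k-t) * (k.choose t : ℝ) *
          (∑ S ∈ powersetCard k (range n),
            (if ValidS n m S then q ^ (S.card - (if 0 ∈ S then 1 else 0)) * p ^ (S.card * m)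
              else 0)) := by
    have step1 : ∀ x : Fin n → Bool,
        (if Gstat m (List.ofFn x) = t then (∏ i, (if x i then q else p)) else 0)
        = ∑ k ∈ Finset.Icc t K, (-1:ℝ)^(k-t) * (k.choose t : ℝ) *
            ((∏ i, (if x i then q else p)) * ((Gstat m (List.ofFn x)).choose k : ℝ)) := by
      intro x
      have hA := stepA t K (Gstat m (List.ofFn x)) (Gstat_le n m hm x)
      calc (if Gstat m (List.ofFn x) = t then (∏ i, (if x i then q else p)) else 0)
          = (∏ i, (if x i then q else p)) * (if Gstat m (List.ofFn x) = t then (1:ℝ) else 0) := by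
            by_cases h : Gstat m (List.ofFn x) = t <;> simp [h]
        _ = (∏ i, (if x i then q else p)) * ∑ k ∈ Finset.Icc t K,
              (-1:ℝ)^(k-t) * (k.choose t : ℝ) * ((Gstat m (List.ofFn x)).choose k : ℝ) := by
            rw [hA]
        _ = _ := by
            rw [Finset.mul_sum]
            apply Finset.sum_congr rfl
            intro k _
            ring
    simp only [strProb]
    refine Eq.trans (Finset.sum_congr rfl fun x _ => (myif_congr Iff.rfl).trans (step1 x)) ?_
    rw [Finset.sum_comm]
    apply Finset.sum_congr rfl
    intro k _
    rw [← Finset.mul_sum]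
    congr 1
    rw [Wk_eq p q n m k]
    apply Finset.sum_congr rfl
    intro S _
    exact sum_event p q hpq n m hm S
  -- Step 2 : per-k weighted value
  have hVk : ∀ k ∈ Finset.Icc t K,
      q * (∑ S ∈ powersetCard k (range n),
          (if ValidS n m S then q ^ (S.card - (if 0 ∈ S then 1 else 0)) * p ^ (S.card * m)
            else 0))
      = ((n + 1 - m*k).choose k : ℝ) * q^k * p^(k*m)
        - ((n - m*k).choose k : ℝ) * q^k * p^(k*m+1) := by
    intro k hk
    rcases Nat.eq_zero_or_pos k with rfl | hk1
    · have hvempty : ValidS n m (∅ : Finset ℕ) :=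
        ⟨fun i hi => absurd hi (Finset.notMem_empty i),
         fun i hi => absurd hi (Finset.notMem_empty i)⟩
      rw [Finset.powersetCard_zero, Finset.sum_singleton, if_pos hvempty,
        if_neg (Finset.notMem_empty 0)]
      simp
      linarith
    · have hkK : k ≤ K := (Finset.mem_Icc.1 hk).2
      have hkn : k + k*m ≤ n+1 := by
        have h1 : k * (m+1) ≤ K * (m+1) := Nat.mul_le_mul_right _ hkK
        have h2 : K * (m+1) ≤ n+1 := Nat.div_mul_le_self _ _
        have h3 : k*(m+1) = k + k*m := by ring
        omega
      rw [sumS p q n m k hm hk1 hkn]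
      obtain ⟨k', rfl⟩ : ∃ k', k = k'+1 := ⟨k-1, by omega⟩
      have hcm : m*(k'+1) = (k'+1)*m := mul_comm _ _
      have hpas : n + 1 - m*(k'+1) = (n - m*(k'+1)) + 1 := by omega
      rw [hpas, hcm, Nat.choose_succ_succ (n - (k'+1)*m) k']
      have hp1 : p = 1 - q := by linarith
      subst hp1
      push_cast
      ring
  -- Step 3 : extend second sum
  have htri : ∀ (N k : ℕ), t ≤ k → (triCh N t (k-t) : ℝ) = (N.choose k : ℝ) * (k.choose t : ℝ) := by
    intro N k h
    rw [triCh, show t + (k-t) = k by omega]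
    push_cast
    ring
  have hext : ∑ k ∈ Finset.Icc t (n / (m + 1)),
        (-1 : ℝ) ^ (k - t) * (triCh (n - m * k) t (k - t) : ℕ) *
          q ^ ((k : ℤ) - 1) * p ^ (k * m + 1)
      = ∑ k ∈ Finset.Icc t K,
        (-1 : ℝ) ^ (k - t) * (triCh (n - m * k) t (k - t) : ℕ) *
          q ^ ((k : ℤ) - 1) * p ^ (k * m + 1) := by
    apply Finset.sum_subset
    · exact Finset.Icc_subset_Icc_right (Nat.div_le_div_right (Nat.le_succ n))
    · intro k hkK hknot
      simp only [Finset.mem_Icc] at hkK hknot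
      have hlt : n / (m+1) < k := by
        by_contra hc
        exact hknot ⟨hkK.1, by omega⟩
      have hnk : n < k * (m+1) := by
        rwa [Nat.div_lt_iff_lt_mul (by omega)] at hlt
      have hz : triCh (n - m * k) t (k - t) = 0 := by
        rw [triCh, show t + (k-t) = k by omega, Nat.choose_eq_zero_of_lt, Nat.zero_mul]
        have h3 : k*(m+1) = k + k*m := by ring
        rw [h3] at hnk
        have h4 : n < k + m*k := by rw [mul_comm m k]; exact hnk
        have hk0 : 1 ≤ k := lt_of_le_of_lt (Nat.zero_le _) hlt
        omega
      rw [hz]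
      simp
  have hzp : ∀ k : ℕ, q * q^((k:ℤ)-1) = q^k := by
    intro k
    rw [zpow_sub₀ hq', zpow_one, zpow_natCast]
    field_simp
  -- Final
  apply mul_left_cancel₀ hq'
  rw [hLHS, hext, ← Finset.sum_sub_distrib, Finset.mul_sum, Finset.mul_sum]
  apply Finset.sum_congr rfl
  intro k hk
  have ht : t ≤ k := (Finset.mem_Icc.1 hk).1
  have hV := hVk k hk
  generalize hg : (∑ S ∈ powersetCard k (range n),
      (if ValidS n m S then q ^ (S.card - (if 0 ∈ S then 1 else 0)) * p ^ (S.card * m)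
        else 0)) = v at hV ⊢
  rw [htri (n + 1 - m * k) k ht, htri (n - m * k) k ht]
  linear_combination ((-1:ℝ)^(k-t) * (k.choose t : ℝ)) * hV
    - ((-1:ℝ)^(k-t) * (k.choose t : ℝ) *
        (((n + 1 - m*k).choose k : ℝ) * p^(k*m) - ((n - m*k).choose k : ℝ) * p^(k*m+1))) * hzp k
end
end

section
/- Let X₁,…,Xₙ be i.i.d. binary with P(X_i = 0) = p, q = 1 - p > 0, and let Lₙ(x) denote the length of the longest run of 0s in x. Then P(Lₙ < m) = Σ_{0 ≤ k ≤ ⌊(n+1)/(m+1)⌋} (-1)^k C(n+1-mk, k) q^{k-1} p^{km} − Σ_{0 ≤ k ≤ ⌊n/(m+1)⌋} (-1)^k C(n-mk, k) q^{k-1} p^{km+1}. -/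
open Finset
open scoped BigOperators Classical

noncomputable section

/-- Length of the longest run of `0`s (`false`s) in `x`. -/
def Lstat (x : List Bool) : ℕ :=
  ((Finset.range (x.length + 1)).filter
    (fun l => List.replicate l false <:+: x)).sup id

namespace Aux9

def sP (P : Bool → ℝ) (n : ℕ) (E : List Bool → Prop) : ℝ :=
  strProb P n (fun x => E (List.ofFn x))

lemma sP_zero (P : Bool → ℝ) (E : List Bool → Prop) :
    sP P 0 E = if E [] then 1 else 0 := by
  simp [sP, strProb, List.ofFn_zero]

lemma sP_succ (P : Bool → ℝ) (n : ℕ) (E : List Bool → Prop) :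
    sP P (n+1) E
      = P true * sP P n (fun s => E (true :: s))
        + P false * sP P n (fun s => E (false :: s)) := by
  unfold sP strProb
  rw [← Equiv.sum_comp (Fin.consEquiv (fun _ : Fin (n+1) => Bool)), Fintype.sum_prod_type,
    Fintype.sum_bool]
  simp only [Fin.consEquiv_apply, Fin.prod_univ_succ, Fin.cons_zero, Fin.cons_succ,
    List.ofFn_succ, Finset.mul_sum, mul_ite, mul_zero]

lemma sP_congr {P : Bool → ℝ} {n : ℕ} {E E' : List Bool → Prop}
    (h : ∀ s : List Bool, s.length = n → (E s ↔ E' s)) : sP P n E = sP P n E' := by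
  unfold sP strProb
  refine Finset.sum_congr rfl fun x _ => ?_
  exact if_congr (h _ (by simp)) rfl rfl

lemma sP_false {P : Bool → ℝ} {n : ℕ} {E : List Bool → Prop}
    (h : ∀ s : List Bool, s.length = n → ¬ E s) : sP P n E = 0 := by
  unfold sP strProb
  refine Finset.sum_eq_zero fun x _ => ?_
  rw [if_neg (h _ (by simp))]

lemma sP_one {P : Bool → ℝ} (hP : P true + P false = 1) {n : ℕ} {E : List Bool → Prop}
    (h : ∀ s : List Bool, s.length = n → E s) : sP P n E = 1 := by
  have : ∀ k, sP P k (fun _ => True) = 1 := by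
    intro k
    induction k with
    | zero => simp [sP_zero]
    | succ k ih => rw [sP_succ]; simp only [ih]; linarith
  calc sP P n E = sP P n (fun _ => True) := sP_congr (by tauto)
    _ = 1 := this n

lemma sP_tail {P : Bool → ℝ} (hP : P true + P false = 1) (n : ℕ) (E : List Bool → Prop) :
    sP P (n+1) (fun s => E s.tail) = sP P n E := by
  rw [sP_succ]
  simp only [List.tail_cons]
  have : sP P n (fun s => E s) = sP P n E := rfl
  rw [this, ← add_mul, hP, one_mul]

lemma sP_sub {P : Bool → ℝ} {n : ℕ} {E E₁ E₂ : List Bool → Prop}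
    (h1 : ∀ s : List Bool, s.length = n → E s → E₁ s)
    (h2 : ∀ s : List Bool, s.length = n → (E₁ s ∧ ¬ E s ↔ E₂ s)) :
    sP P n E = sP P n E₁ - sP P n E₂ := by
  unfold sP strProb
  rw [← Finset.sum_sub_distrib]
  refine Finset.sum_congr rfl fun x _ => ?_
  have hl : (List.ofFn x).length = n := by simp
  by_cases hE : E (List.ofFn x)
  · have hE1 : E₁ (List.ofFn x) := h1 _ hl hE
    have hE2 : ¬ E₂ (List.ofFn x) := fun h => ((h2 _ hl).2 h).2 hE
    rw [if_pos hE, if_pos hE1, if_neg hE2]; ring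
  · by_cases hE1 : E₁ (List.ofFn x)
    · have hE2 : E₂ (List.ofFn x) := (h2 _ hl).1 ⟨hE1, hE⟩
      rw [if_neg hE, if_pos hE1, if_pos hE2]; ring
    · have hE2 : ¬ E₂ (List.ofFn x) := fun h => hE1 ((h2 _ hl).2 h).1
      rw [if_neg hE, if_neg hE1, if_neg hE2]; ring

lemma prefix_peel (P : Bool → ℝ) (w : List Bool) (l : ℕ) (E : List Bool → Prop) :
    sP P (w.length + l) (fun s => w <+: s ∧ E (s.drop w.length))
      = wordProb P w * sP P l E := by
  induction w generalizing E with
  | nil =>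
      simp only [List.length_nil, Nat.zero_add, List.drop_zero, wordProb, List.map_nil,
        List.prod_nil, one_mul]
      exact sP_congr (fun s _ => by simp)
  | cons a w ih =>
      have hn : (a :: w).length + l = (w.length + l) + 1 := by simp; omega
      rw [hn, sP_succ]
      have key : ∀ b : Bool,
          sP P (w.length + l) (fun s => (a :: w <+: b :: s) ∧ E ((b :: s).drop (a :: w).length))
            = (if a = b then (1:ℝ) else 0) * (wordProb P w * sP P l E) := by
        intro b
        by_cases hab : a = b
        · subst hab
          rw [if_pos rfl, one_mul, ← ih E]
          exact sP_congr (fun s _ => by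
            simp [List.cons_prefix_cons])
        · rw [if_neg hab, zero_mul]
          exact sP_false (fun s _ hs => hab (List.cons_prefix_cons.1 hs.1).1)
      rw [key true, key false]
      have : wordProb P (a :: w) = P a * wordProb P w := by simp [wordProb]
      rw [this]
      cases a <;> simp <;> ring

lemma cross {k : ℕ} {u v : List Bool}
    (h : List.replicate k false <:+: u ++ true :: v) :
    List.replicate k false <:+: u ∨ List.replicate k false <:+: v := by
  obtain ⟨lf, rt, h⟩ := h
  have hlen : lf.length + k + rt.length = u.length + 1 + v.length := by
    have := congrArg List.length h
    simp only [List.length_append, List.length_replicate, List.length_cons] at this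
    omega
  rcases le_or_gt (lf.length + k) u.length with h1 | h1
  · left
    have hpre : lf ++ List.replicate k false <+: u ++ true :: v :=
      ⟨rt, by rw [← h, List.append_assoc]⟩
    have hpre2 : lf ++ List.replicate k false <+: u :=
      List.prefix_of_prefix_length_le hpre (List.prefix_append u (true :: v))
        (by simpa using h1)
    obtain ⟨t, ht⟩ := hpre2
    exact ⟨lf, t, by rw [← ht, List.append_assoc]⟩
  · rcases le_or_gt (u.length + 1) lf.length with h2 | h2
    · right
      have hsuf : List.replicate k false ++ rt <:+ u ++ true :: v :=
        ⟨lf, by rw [← h]; simp [List.append_assoc]⟩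
      have hsufv : List.replicate k false ++ rt <:+ v := by
        refine List.suffix_of_suffix_length_le hsuf ?_ ?_
        · exact (List.suffix_cons true v).trans (List.suffix_append u (true :: v))
        · simp only [List.length_append, List.length_replicate]; omega
      obtain ⟨pre, hpre⟩ := hsufv
      exact ⟨pre, rt, by rw [← hpre]; simp [List.append_assoc]⟩
    · exfalso
      have hb : u.length < (lf ++ List.replicate k false ++ rt).length := by
        simp only [List.length_append, List.length_replicate]; omega
      have heq := List.getElem_of_eq h hb
      have hT : (u ++ true :: v)[u.length]'(h ▸ hb) = true := by
        rw [List.getElem_append_right (le_refl u.length)]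
        simp
      have hF : (lf ++ List.replicate k false ++ rt)[u.length]'hb = false := by
        simp only [List.append_assoc]
        rw [List.getElem_append_right (by omega)]
        · rw [List.getElem_append_left (by simp only [List.length_replicate]; omega)]
          exact List.getElem_replicate _
      rw [heq, hT] at hF
      exact Bool.noConfusion hF

lemma key_iff (m : ℕ) (hm : 1 ≤ m) (s : List Bool) (hs : m + 1 ≤ s.length) :
    ((¬ List.replicate m false <:+: s.tail) ∧ List.replicate m false <:+: s) ↔
      ((List.replicate m false ++ [true]) <+: s ∧
        ¬ List.replicate m false <:+: s.drop (m+1)) := by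
  obtain ⟨m', rfl⟩ : ∃ m', m = m' + 1 := ⟨m - 1, by omega⟩
  constructor
  · rintro ⟨ht, lf, rt, h⟩
    cases lf with
    | cons a lf' =>
        exfalso
        apply ht
        have : s.tail = lf' ++ List.replicate (m'+1) false ++ rt := by
          rw [← h]; rfl
        exact ⟨lf', rt, this.symm⟩
    | nil =>
        simp only [List.nil_append] at h
        match rt, h with
        | [], h =>
            exfalso
            have := congrArg List.length h
            simp at this; omega
        | false :: r', h =>
            exfalso
            apply ht
            have hts : s.tail = List.replicate m' false ++ false :: r' := by
              rw [← h, List.replicate_succ]; rfl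
            refine ⟨[], r', ?_⟩
            rw [hts, List.nil_append, List.replicate_succ', List.append_assoc]
            rfl
        | true :: r', h =>
            have hseq : s = (List.replicate (m'+1) false ++ [true]) ++ r' := by
              rw [← h]; simp
            constructor
            · exact ⟨r', hseq.symm ▸ rfl⟩
            · have hdrop : s.drop (m' + 1 + 1) = r' := by
                rw [hseq]
                have : m' + 1 + 1 = (List.replicate (m'+1) false ++ [true]).length := by simp
                rw [this, List.drop_left]
              rw [hdrop]
              intro hinf
              apply ht
              have hts : s.tail = List.replicate m' false ++ true :: r' := by
                rw [← h, List.replicate_succ]; rfl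
              rw [hts]
              exact hinf.trans ⟨List.replicate m' false ++ [true], [],
                by simp [List.append_assoc]⟩
  · rintro ⟨⟨z, hz⟩, hdrop⟩
    have hdz : s.drop (m' + 1 + 1) = z := by
      rw [← hz]
      have : m' + 1 + 1 = (List.replicate (m'+1) false ++ [true]).length := by simp
      rw [this, List.drop_left]
    rw [hdz] at hdrop
    constructor
    · intro hinf
      have hts : s.tail = List.replicate m' false ++ true :: z := by
        rw [← hz, List.replicate_succ]; simp
      rw [hts] at hinf
      rcases cross hinf with h1 | h1
      · have := h1.length_le; simp at this
      · exact hdrop h1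
    · exact ⟨[], true :: z, by rw [← hz]; simp⟩

lemma Lstat_lt_iff {m : ℕ} (hm : 1 ≤ m) (s : List Bool) :
    Lstat s < m ↔ ¬ List.replicate m false <:+: s := by
  unfold Lstat
  rw [Finset.sup_lt_iff (by exact hm : (⊥ : ℕ) < m)]
  constructor
  · intro h hinf
    have hlen : m ≤ s.length := by
      have := hinf.length_le; simpa using this
    have hmem : m ∈ (Finset.range (s.length + 1)).filter
        (fun l => List.replicate l false <:+: s) := by
      simp only [Finset.mem_filter, Finset.mem_range]
      exact ⟨by omega, hinf⟩
    exact lt_irrefl m (h m hmem)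
  · intro h l hl
    simp only [Finset.mem_filter, Finset.mem_range] at hl
    simp only [id_eq]
    by_contra hlm
    push_neg at hlm
    apply h
    refine (List.IsPrefix.isInfix ⟨List.replicate (l - m) false, ?_⟩).trans hl.2
    rw [← List.replicate_add]
    congr 1
    omega

def Pf (p q : ℝ) : Bool → ℝ := fun b => if b then q else p

def B (p q : ℝ) (m n : ℕ) : ℝ :=
  sP (Pf p q) n (fun s => ¬ List.replicate m false <:+: s)

lemma Pf_sum {p q : ℝ} (hpq : p + q = 1) : Pf p q true + Pf p q false = 1 := by
  simp [Pf]; linarith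

lemma B_lt {p q : ℝ} (hpq : p + q = 1) {m n : ℕ} (h : n < m) : B p q m n = 1 := by
  refine sP_one (Pf_sum hpq) fun s hs hinf => ?_
  have := hinf.length_le
  simp only [List.length_replicate, hs] at this
  omega

lemma sP_not {P : Bool → ℝ} (hP : P true + P false = 1) {n : ℕ} (E : List Bool → Prop) :
    sP P n (fun s => ¬ E s) = 1 - sP P n E := by
  have h : sP P n E + sP P n (fun s => ¬ E s) = 1 := by
    rw [show (1:ℝ) = sP P n (fun _ => True) from (sP_one hP (fun _ _ => trivial)).symm]
    unfold sP strProb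
    rw [← Finset.sum_add_distrib]
    refine Finset.sum_congr rfl fun x _ => ?_
    by_cases hE : E (List.ofFn x) <;> simp [hE]
  linarith

lemma B_eq {p q : ℝ} (hpq : p + q = 1) {m : ℕ} : B p q m m = 1 - p ^ m := by
  unfold B
  rw [sP_not (Pf_sum hpq)]
  congr 1
  have h1 : sP (Pf p q) m (fun s => List.replicate m false <:+: s)
      = sP (Pf p q) m (fun s => List.replicate m false <+: s ∧
          (fun _ : List Bool => True) (s.drop (List.replicate m false).length)) := by
    refine sP_congr fun s hs => ?_
    constructor
    · intro h
      exact ⟨h.eq_of_length (by simp [hs]) ▸ List.prefix_rfl, trivial⟩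
    · intro h
      exact h.1.isInfix
  rw [h1]
  have h2 : m = (List.replicate m false).length + 0 := by simp
  rw [show sP (Pf p q) m
      = sP (Pf p q) ((List.replicate m false).length + 0) from by rw [← h2]]
  rw [prefix_peel (Pf p q) (List.replicate m false) 0 (fun _ => True)]
  rw [sP_one (Pf_sum hpq) (fun _ _ => trivial)]
  simp [wordProb, Pf, List.map_replicate]

lemma B_rec {p q : ℝ} (hpq : p + q = 1) {m N : ℕ} (hm : 1 ≤ m) (hN : m ≤ N) :
    B p q m (N+1) = B p q m N - p ^ m * q * B p q m (N - m) := by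
  unfold B
  rw [sP_sub (E₁ := fun s => ¬ List.replicate m false <:+: s.tail)
      (E₂ := fun s => (List.replicate m false ++ [true]) <+: s ∧
        ¬ List.replicate m false <:+: s.drop (m+1))
      (fun s hs h hinf => h (hinf.trans (s.tail_suffix.isInfix)))
      (fun s hs => by
        rw [not_not]
        exact key_iff m hm s (by omega))]
  congr 1
  · exact sP_tail (Pf_sum hpq) N (fun s => ¬ List.replicate m false <:+: s)
  · have hw : (List.replicate m false ++ [true]).length = m + 1 := by simp
    have h3 := prefix_peel (Pf p q) (List.replicate m false ++ [true]) (N - m)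
      (fun z => ¬ List.replicate m false <:+: z)
    rw [hw] at h3
    rw [show N + 1 = m + 1 + (N - m) from by omega, h3]
    congr 1
    simp [wordProb, Pf, List.map_replicate]

def Sa (t : ℝ) (m n : ℕ) : ℝ :=
  ∑ k ∈ Finset.range (n+1), ((n - m*k).choose k : ℝ) * t^k

lemma pascal_shift {m n : ℕ} (hm : 1 ≤ m) (h : m ≤ n) (j : ℕ) :
    (n + 1 - m*(j+1)).choose (j+1)
      = (n - m*(j+1)).choose (j+1) + ((n - m) - m*j).choose j := by
  have hmj : m*(j+1) = m*j + m := by ring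
  rcases le_or_gt (m*(j+1)) n with hle | hlt
  · have e1 : n + 1 - m*(j+1) = (n - m*(j+1)) + 1 := by omega
    have e2 : n - m*(j+1) = (n - m) - m*j := by omega
    rw [e1, Nat.choose_succ_succ, e2, Nat.add_comm]
  · have hj : 1 ≤ j := by
      rcases Nat.eq_zero_or_pos j with rfl | hj
      · omega
      · exact hj
    have e1 : n + 1 - m*(j+1) = 0 := by omega
    have e2 : n - m*(j+1) = 0 := by omega
    have e3 : (n - m) - m*j = 0 := by
      have : j ≤ m * j := Nat.le_mul_of_pos_left j (by omega)
      omega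
    have c1 : Nat.choose 0 (j+1) = 0 := Nat.choose_eq_zero_of_lt (by omega)
    have c2 : Nat.choose 0 j = 0 := Nat.choose_eq_zero_of_lt (by omega)
    rw [e1, e2, e3, c1, c2]

lemma Sa_le (t : ℝ) {m n : ℕ} (hm : 1 ≤ m) (h : n ≤ m) : Sa t m n = 1 := by
  unfold Sa
  rw [Finset.sum_range_succ']
  have : ∀ j ∈ Finset.range n, ((n - m*(j+1)).choose (j+1) : ℝ) * t^(j+1) = 0 := by
    intro j _
    have e : n - m*(j+1) = 0 := by
      have : m ≤ m * (j+1) := Nat.le_mul_of_pos_right m (by omega)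
      omega
    rw [e, Nat.choose_eq_zero_of_lt (by omega)]
    simp
  rw [Finset.sum_congr rfl this]
  simp

lemma Sa_rec (t : ℝ) {m n : ℕ} (hm : 1 ≤ m) (h : m ≤ n) :
    Sa t m (n+1) = Sa t m n + t * Sa t m (n - m) := by
  unfold Sa
  rw [Finset.sum_range_succ' (fun k => ((n + 1 - m*k).choose k : ℝ) * t^k) (n+1)]
  have step1 : ∀ j ∈ Finset.range (n+1),
      ((n + 1 - m*(j+1)).choose (j+1) : ℝ) * t^(j+1)
        = ((n - m*(j+1)).choose (j+1) : ℝ) * t^(j+1)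
          + t * (((n - m - m*j).choose j : ℝ) * t^j) := by
    intro j _
    rw [pascal_shift hm h j]
    push_cast
    ring
  rw [Finset.sum_congr rfl step1, Finset.sum_add_distrib]
  have part1 : ∑ j ∈ Finset.range (n+1), ((n - m*(j+1)).choose (j+1) : ℝ) * t^(j+1)
      = ∑ k ∈ Finset.range (n+1), ((n - m*k).choose k : ℝ) * t^k - 1 := by
    rw [Finset.sum_range_succ' (fun k => ((n - m*k).choose k : ℝ) * t^k) n]
    rw [Finset.sum_range_succ]
    have : ((n - m*(n+1)).choose (n+1) : ℝ) = 0 := by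
      have e : n - m*(n+1) = 0 := by
        have : n + 1 ≤ m * (n+1) := Nat.le_mul_of_pos_left (n+1) (by omega)
        omega
      rw [e, Nat.choose_eq_zero_of_lt (by omega)]
      simp
    rw [this]
    simp
  have part2 : ∑ j ∈ Finset.range (n+1), t * (((n - m - m*j).choose j : ℝ) * t^j)
      = t * ∑ k ∈ Finset.range (n - m + 1), ((n - m - m*k).choose k : ℝ) * t^k := by
    rw [Finset.mul_sum]
    symm
    apply Finset.sum_subset (Finset.range_subset_range.2 (by omega))
    intro j _ hj
    simp only [Finset.mem_range, not_lt] at hj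
    have e : n - m - m*j = 0 := by
      have : j ≤ m * j := Nat.le_mul_of_pos_left j (by omega)
      omega
    rw [e, Nat.choose_eq_zero_of_lt (by omega)]
    simp
  rw [part1, part2]
  simp only [Nat.choose_zero_right, Nat.cast_one, pow_zero, one_mul, mul_one]
  ring

lemma B_eq_F {p q : ℝ} (hpq : p + q = 1) (hq : q ≠ 0) {m : ℕ} (hm : 1 ≤ m) (n : ℕ) :
    B p q m n
      = (Sa (-(q * p^m)) m (n+1) - p * Sa (-(q * p^m)) m n) / q := by
  induction n using Nat.strong_induction_on with
  | _ n ih =>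
    rcases lt_trichotomy n m with hlt | heq | hgt
    · rw [B_lt hpq hlt, Sa_le _ hm (by omega), Sa_le _ hm (by omega)]
      field_simp
      linarith
    · subst heq
      rw [B_eq hpq, Sa_rec _ hm le_rfl, Sa_le _ hm le_rfl,
        Sa_le _ hm (by omega : n - n ≤ n)]
      field_simp
      ring_nf
      nlinarith [sq_nonneg q]
    · obtain ⟨N, rfl⟩ : ∃ N, n = N + 1 := ⟨n - 1, by omega⟩
      have hN : m ≤ N := by omega
      rw [B_rec hpq hm hN, ih N (by omega), ih (N - m) (by omega),
        Sa_rec _ hm (show m ≤ N + 1 by omega), Sa_rec _ hm hN,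
        show N + 1 - m = (N - m) + 1 from by omega]
      field_simp
      ring

lemma sum_eq {p q : ℝ} (hq : q ≠ 0) {m : ℕ} (hm : 1 ≤ m) (M : ℕ) :
    ∑ k ∈ Finset.range (M / (m + 1) + 1),
        (-1 : ℝ) ^ k * ((M - m * k).choose k : ℕ) * q ^ ((k : ℤ) - 1) * p ^ (k * m)
      = Sa (-(q * p^m)) m M * q⁻¹ := by
  have hext : ∑ k ∈ Finset.range (M / (m + 1) + 1),
        (-1 : ℝ) ^ k * ((M - m * k).choose k : ℕ) * q ^ ((k : ℤ) - 1) * p ^ (k * m)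
      = ∑ k ∈ Finset.range (M + 1),
        (-1 : ℝ) ^ k * ((M - m * k).choose k : ℕ) * q ^ ((k : ℤ) - 1) * p ^ (k * m) := by
    apply Finset.sum_subset
      (Finset.range_subset_range.2 (by have := Nat.div_le_self M (m+1); omega))
    intro k _ hk
    simp only [Finset.mem_range, not_lt] at hk
    have hdiv : M / (m+1) < k := by omega
    have hMk : M < k * (m+1) := (Nat.div_lt_iff_lt_mul (by omega)).1 hdiv
    have hkm : k * (m+1) = m*k + k := by ring
    have hk0 : 1 ≤ k := Nat.one_le_iff_ne_zero.2 (by rintro rfl; exact Nat.not_lt_zero _ hdiv)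
    have : M - m*k < k := by omega
    rw [Nat.choose_eq_zero_of_lt this]
    simp
  rw [hext, Sa, Finset.sum_mul]
  refine Finset.sum_congr rfl fun k _ => ?_
  rw [zpow_sub_one₀ hq, zpow_natCast]
  rw [show (-(q * p^m))^k = (-1:ℝ)^k * (q^k * p^(m*k)) from by
    rw [neg_pow, mul_pow, ← pow_mul]]
  rw [Nat.mul_comm m k]
  ring

end Aux9

open Aux9 in
/-- Explicit formula for `P(Lₙ < m)`, the longest `0`-run being shorter than `m`. -/
theorem stmt9 (p q : ℝ) (hpq : p + q = 1) (hp : 0 ≤ p) (hq : 0 < q)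
    (n m : ℕ) (hm : 1 ≤ m) :
    strProb (fun b => if b then q else p) n (fun x => Lstat (List.ofFn x) < m) =
      (∑ k ∈ Finset.range ((n + 1) / (m + 1) + 1),
          (-1 : ℝ) ^ k * ((n + 1 - m * k).choose k : ℕ) *
            q ^ ((k : ℤ) - 1) * p ^ (k * m)) -
      (∑ k ∈ Finset.range (n / (m + 1) + 1),
          (-1 : ℝ) ^ k * ((n - m * k).choose k : ℕ) *
            q ^ ((k : ℤ) - 1) * p ^ (k * m + 1)) := by
  have hL : strProb (fun b => if b then q else p) n (fun x => Lstat (List.ofFn x) < m)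
      = B p q m n := by
    show sP (Pf p q) n (fun s => Lstat s < m) = _
    exact sP_congr (fun s _ => Lstat_lt_iff hm s)
  rw [hL, B_eq_F hpq hq.ne' hm n, sum_eq hq.ne' hm (n+1)]
  have h2 : ∑ k ∈ Finset.range (n / (m + 1) + 1),
        (-1 : ℝ) ^ k * ((n - m * k).choose k : ℕ) * q ^ ((k : ℤ) - 1) * p ^ (k * m + 1)
      = (∑ k ∈ Finset.range (n / (m + 1) + 1),
          (-1 : ℝ) ^ k * ((n - m * k).choose k : ℕ) * q ^ ((k : ℤ) - 1) * p ^ (k * m)) * p := by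
    rw [Finset.sum_mul]
    refine Finset.sum_congr rfl fun k _ => ?_
    rw [pow_succ]
    ring
  rw [h2, sum_eq hq.ne' hm n]
  field_simp
end
end

section
/- Let X₁,…,Xₙ be i.i.d. over a finite alphabet and w₁ ⊏ … ⊏ w_h increasing nonoverlapping words, with C the statistic Σ i·kᵢ from N′. Then for any d < h and all t, |P(C_{n,(w₁,…,w_d)}(X₁…Xₙ) = t) − P(C_{n,(w₁,…,w_h)}(X₁…Xₙ) = t)| ≤ (n − |w_{d+1}| + 1) · P(w_{d+1}). -/
open Finset
open scoped BigOperators Classical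

noncomputable section

section Aux

variable {A : Type*}

/-- Characterization of an occurrence at position `i` via coordinates. -/
lemma occAt_iff [DecidableEq A] (w : List A) {n : ℕ} (x : Fin n → A) (i : ℕ)
    (hi : i + w.length ≤ n) :
    (List.take w.length (List.drop i (List.ofFn x)) = w) ↔
      ∀ k (hk : k < w.length), w[k]? = some (x ⟨i + k, by omega⟩) := by
  constructor
  · intro hocc k hk
    have h1 : (List.take w.length (List.drop i (List.ofFn x)))[k]? = w[k]? := by rw [hocc]
    rw [List.getElem?_take, if_pos hk, List.getElem?_drop, List.getElem?_ofFn] at h1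
    rw [← h1]
    simp [List.ofFnNthVal, show i + k < n by omega]
  · intro hk
    apply List.ext_getElem?
    intro k
    by_cases hkw : k < w.length
    · rw [List.getElem?_take, if_pos hkw, List.getElem?_drop, List.getElem?_ofFn]
      rw [hk k hkw]
      simp [List.ofFnNthVal, show i + k < n by omega]
    · have h1 : (List.take w.length (List.drop i (List.ofFn x))).length ≤ k := by
        rw [List.length_take, List.length_drop, List.length_ofFn]; omega
      rw [List.getElem?_eq_none h1, List.getElem?_eq_none (show w.length ≤ k by omega)]

/-- Probability that a fixed position carries the word `w`. -/
lemma probOcc [Fintype A] [DecidableEq A] (P : A → ℝ) (hP1 : ∑ a, P a = 1)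
    (n : ℕ) (w : List A) (i : ℕ) (hi : i + w.length ≤ n) :
    strProb P n (fun x => List.take w.length (List.drop i (List.ofFn x)) = w)
      = wordProb P w := by
  classical
  set f : Fin n → A → ℝ := fun j a =>
    if i ≤ j.val ∧ j.val < i + w.length then (if w[j.val - i]? = some a then P a else 0)
    else P a with hf
  have step1 : ∀ x : Fin n → A,
      (if List.take w.length (List.drop i (List.ofFn x)) = w then ∏ j, P (x j) else 0)
        = ∏ j, f j (x j) := by
    intro x
    by_cases hc : List.take w.length (List.drop i (List.ofFn x)) = w
    · rw [if_pos hc]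
      refine Finset.prod_congr rfl fun j _ => ?_
      by_cases hw : i ≤ j.val ∧ j.val < i + w.length
      · have hk : j.val - i < w.length := by omega
        have := (occAt_iff w x i hi).mp hc (j.val - i) hk
        have hj : (⟨i + (j.val - i), by omega⟩ : Fin n) = j := by
          apply Fin.ext; simp; omega
        rw [hj] at this
        simp [hf, hw, this]
      · simp [hf, hw]
    · rw [if_neg hc]
      rw [occAt_iff w x i hi] at hc
      push_neg at hc
      obtain ⟨k, hk, hne⟩ := hc
      refine (Finset.prod_eq_zero (Finset.mem_univ (⟨i + k, by omega⟩ : Fin n)) ?_).symm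
      have hw : i ≤ i + k ∧ i + k < i + w.length := by omega
      have : i + k - i = k := by omega
      simp [hf, hw, this, hne]
  have step2 : ∑ x : Fin n → A, ∏ j, f j (x j) = ∏ j, ∑ a, f j a := by
    rw [Finset.prod_univ_sum (fun _ => Finset.univ) f, Fintype.piFinset_univ]
  have step3 : ∀ j : Fin n, ∑ a, f j a =
      if i ≤ j.val ∧ j.val < i + w.length
      then ((w[j.val - i]?).map P).getD 1 else 1 := by
    intro j
    by_cases hw : i ≤ j.val ∧ j.val < i + w.length
    · have hk : j.val - i < w.length := by omega
      have hc : w[j.val - i]? = some (w[j.val - i]) := List.getElem?_eq_getElem hk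
      simp only [hf, if_pos hw, hc]
      simp only [Option.some.injEq, Option.map_some, Option.getD_some]
      rw [Finset.sum_ite_eq Finset.univ (w[j.val - i]) P, if_pos (Finset.mem_univ _)]
    · simp only [hf, if_neg hw]
      rw [hP1]
  have step4 : (∏ j : Fin n, if i ≤ j.val ∧ j.val < i + w.length
      then ((w[j.val - i]?).map P).getD 1 else 1) = wordProb P w := by
    have hword : wordProb P w = ∏ k : Fin w.length, P (w.get k) := by
      rw [wordProb, ← List.prod_ofFn]
      congr 1
      rw [← List.ofFn_get (w.map P)]
      apply List.ext_getElem <;> simp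
    rw [hword, ← Finset.prod_filter]
    refine Finset.prod_bij' (fun j hj => (⟨j.val - i, by
        simp only [Finset.mem_filter] at hj; omega⟩ : Fin w.length))
      (fun k _ => (⟨i + k.val, by omega⟩ : Fin n)) ?_ ?_ ?_ ?_ ?_
    · intro j hj; exact Finset.mem_univ _
    · intro k hk
      simp only [Finset.mem_filter, Finset.mem_univ, true_and]
      exact ⟨by omega, by omega⟩
    · intro j hj
      simp only [Finset.mem_filter] at hj
      apply Fin.ext; simp; omega
    · intro k hk; apply Fin.ext; simp
    · intro j hj
      simp only [Finset.mem_filter] at hj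
      have hk : j.val - i < w.length := by omega
      rw [List.getElem?_eq_getElem hk]
      simp [List.get_eq_getElem]
  rw [strProb]
  refine Eq.trans (Finset.sum_congr rfl fun x _ => ?_)
    (step2.trans ((Finset.prod_congr rfl fun j _ => step3 j).trans step4))
  rw [← step1 x]
  by_cases hc : List.take w.length (List.drop i (List.ofFn x)) = w <;> simp [hc]

/-- Union bound: probability that `w` occurs somewhere. -/
lemma unionBound [Fintype A] [DecidableEq A] (P : A → ℝ) (hP0 : ∀ a, 0 ≤ P a)
    (hP1 : ∑ a, P a = 1) (n : ℕ) (w : List A) :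
    strProb P n (fun x => occCount w (List.ofFn x) ≠ 0)
      ≤ ((n + 1 - w.length : ℕ) : ℝ) * wordProb P w := by
  classical
  have hnn : ∀ (x : Fin n → A), 0 ≤ ∏ j, P (x j) :=
    fun x => Finset.prod_nonneg fun j _ => hP0 _
  have key : strProb P n (fun x => occCount w (List.ofFn x) ≠ 0)
      ≤ ∑ i ∈ Finset.range (n + 1 - w.length),
          strProb P n (fun x => List.take w.length (List.drop i (List.ofFn x)) = w) := by
    simp only [strProb]
    rw [Finset.sum_comm]
    refine Finset.sum_le_sum fun x _ => ?_
    by_cases hocc : occCount w (List.ofFn x) ≠ 0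
    · rw [if_pos hocc]
      rw [occCount] at hocc
      have : ∃ a ∈ List.range ((List.ofFn x).length + 1 - w.length),
          decide (List.take w.length (List.drop a (List.ofFn x)) = w) = true := by
        by_contra hcon
        push_neg at hcon
        exact hocc (List.countP_eq_zero.mpr hcon)
      obtain ⟨i, hi, hdec⟩ := this
      rw [List.mem_range, List.length_ofFn] at hi
      have hdec' : List.take w.length (List.drop i (List.ofFn x)) = w := of_decide_eq_true hdec
      have h1 := Finset.single_le_sum (s := Finset.range (n + 1 - w.length))
        (f := fun i =>
          if List.take w.length (List.drop i (List.ofFn x)) = w then ∏ j, P (x j) else 0)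
        (fun i _ => by split_ifs <;> simp [hnn x]) (Finset.mem_range.mpr hi)
      rw [if_pos hdec'] at h1
      refine h1.trans_eq (Finset.sum_congr rfl fun i _ => ?_)
      by_cases hc : List.take w.length (List.drop i (List.ofFn x)) = w <;> simp [hc]
    · rw [if_neg hocc]
      exact Finset.sum_nonneg fun i _ => by split_ifs <;> simp [hnn x]
  refine key.trans ?_
  have heach : ∀ i ∈ Finset.range (n + 1 - w.length),
      strProb P n (fun x => List.take w.length (List.drop i (List.ofFn x)) = w)
        = wordProb P w := by
    intro i hi
    rw [Finset.mem_range] at hi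
    exact probOcc P hP1 n w i (by omega)
  rw [Finset.sum_congr rfl heach, Finset.sum_const, Finset.card_range, nsmul_eq_mul]

/-- Occurrences of an extension vanish when occurrences of the prefix vanish. -/
lemma occ_zero_of_prefix [DecidableEq A] {w v : List A} (hwv : w <+: v) {x : List A}
    (h0 : occCount w x = 0) : occCount v x = 0 := by
  have hl : w.length ≤ v.length := hwv.length_le
  rw [occCount, List.countP_eq_zero] at h0 ⊢
  intro i hi hv
  rw [List.mem_range] at hi
  rw [decide_eq_true_eq] at hv
  refine h0 i (List.mem_range.mpr (by omega)) ?_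
  rw [decide_eq_true_eq]
  have h1 : List.take w.length (List.drop i x)
      = List.take w.length (List.take v.length (List.drop i x)) := by
    rw [List.take_take, min_eq_left hl]
  rw [h1, hv, ← List.prefix_iff_eq_take.mp hwv]

/-- Truncation identity for `Cstat` when the `(d+1)`-st word does not occur. -/
lemma cstat_trunc [DecidableEq A] {h d : ℕ} (hdh : d < h) (ws : Fin h → List A)
    (hpre : ∀ i j : Fin h, i < j → ws i <+: ws j ∧ ws i ≠ ws j) (x : List A)
    (h0 : occCount (ws ⟨d, hdh⟩) x = 0) :
    Cstat (fun i : Fin d => ws (Fin.castLE hdh.le i)) x = Cstat ws x := by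
  classical
  set o : ℕ → ℕ := fun j => if hj : j < h then occCount (ws ⟨j, hj⟩) x else 0 with ho
  have hoz : ∀ j, d ≤ j → o j = 0 := by
    intro j hj
    by_cases hjh : j < h
    · simp only [ho, dif_pos hjh]
      rcases eq_or_lt_of_le hj with rfl | hlt
      · exact h0
      · exact occ_zero_of_prefix
          (hpre ⟨d, hdh⟩ ⟨j, hjh⟩ (by exact hlt)).1 h0
    · simp [ho, hjh]
  have e1 : Cstat ws x = ∑ j ∈ Finset.range h, (j + 1) * (o j - o (j + 1)) := by
    rw [Cstat, ← Fin.sum_univ_eq_sum_range (fun j => (j + 1) * (o j - o (j + 1))) h]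
    refine Finset.sum_congr rfl fun i _ => ?_
    have h1 : o i.val = occCount (ws i) x := by simp [ho, i.isLt]
    have h2 : o (i.val + 1) = if hlt : i.val + 1 < h then occCount (ws ⟨i.val + 1, hlt⟩) x
        else 0 := rfl
    rw [h1, h2]
  have e2 : Cstat (fun i : Fin d => ws (Fin.castLE hdh.le i)) x
      = ∑ j ∈ Finset.range d, (j + 1) * (o j - o (j + 1)) := by
    rw [Cstat, ← Fin.sum_univ_eq_sum_range (fun j => (j + 1) * (o j - o (j + 1))) d]
    refine Finset.sum_congr rfl fun i _ => ?_
    have h1 : o i.val = occCount (ws (Fin.castLE hdh.le i)) x := by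
      simp only [ho, dif_pos (lt_of_lt_of_le i.isLt hdh.le)]
      rfl
    have h2 : o (i.val + 1) = if hlt : i.val + 1 < d
        then occCount (ws (Fin.castLE hdh.le ⟨i.val + 1, hlt⟩)) x else 0 := by
      by_cases hlt : i.val + 1 < d
      · rw [dif_pos hlt]
        simp only [ho, dif_pos (lt_of_lt_of_le hlt hdh.le)]
        rfl
      · rw [dif_neg hlt]
        exact hoz _ (by omega)
    rw [h1, h2]
  rw [e1, e2]
  refine Finset.sum_subset (Finset.range_subset_range.mpr hdh.le) fun j hj hjd => ?_
  rw [Finset.mem_range] at hj hjd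
  rw [hoz j (by omega), hoz (j + 1) (by omega)]
  simp

/-- Difference of probabilities of events agreeing off `G` is bounded by `P(G)`. -/
lemma diff_bound [Fintype A] (P : A → ℝ) (hP0 : ∀ a, 0 ≤ P a) (n : ℕ)
    (E1 E2 G : (Fin n → A) → Prop) (hEq : ∀ x, ¬ G x → (E1 x ↔ E2 x)) :
    |strProb P n E1 - strProb P n E2| ≤ strProb P n G := by
  classical
  rw [strProb, strProb, strProb, ← Finset.sum_sub_distrib]
  refine (Finset.abs_sum_le_sum_abs _ _).trans (Finset.sum_le_sum fun x _ => ?_)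
  have hp : (0:ℝ) ≤ ∏ j, P (x j) := Finset.prod_nonneg fun j _ => hP0 _
  by_cases hg : G x
  · rw [if_pos hg]
    split_ifs <;>
      simp [abs_of_nonneg, abs_of_nonpos, hp, neg_nonpos.mpr hp]
  · rw [if_neg hg, if_congr (hEq x hg) rfl rfl, sub_self, abs_zero]

end Aux

/-- Truncation bound for the `C` statistic: dropping the words `w_{d+1},…,w_h`
changes each point probability by at most `(n - |w_{d+1}| + 1)·P(w_{d+1})`. -/
theorem stmt15 {A : Type*} [Fintype A] [DecidableEq A] (P : A → ℝ)
    (hP0 : ∀ a, 0 ≤ P a) (hP1 : ∑ a, P a = 1)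
    (n h d : ℕ) (hdh : d < h) (ws : Fin h → List A)
    (hno : ∀ i, Nonoverlapping (ws i))
    (hpre : ∀ i j : Fin h, i < j → ws i <+: ws j ∧ ws i ≠ ws j) (t : ℕ) :
    |strProb P n
        (fun x => Cstat (fun i : Fin d => ws (Fin.castLE hdh.le i)) (List.ofFn x) = t) -
      strProb P n (fun x => Cstat ws (List.ofFn x) = t)| ≤
      ((n + 1 - (ws ⟨d, hdh⟩).length : ℕ) : ℝ) * wordProb P (ws ⟨d, hdh⟩) := by
  classical
  refine (diff_bound P hP0 n _ _
      (fun x => occCount (ws ⟨d, hdh⟩) (List.ofFn x) ≠ 0) ?_).trans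
    (unionBound P hP0 hP1 n (ws ⟨d, hdh⟩))
  intro x hx
  rw [not_ne_iff] at hx
  rw [cstat_trunc hdh ws hpre (List.ofFn x) hx]
end
end
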